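/- arXiv:0710.1598 — 6 statements merged into one kernel-verified Lean document; each statement's English description precedes it below -/
import Mathlib

section
/- Let N ≥ 2, let (ℓ, n, m_2, …, m_{N−1}) be a null frame of ℝ^N, and for z ∈ ℝ^{N−2} consider the null rotation about ℓ: ℓ̂ = ℓ, m̂_i = m_i + z_i ℓ, n̂ = n − Σ_i z_i m_i − ½(Σ_i z_i²) ℓ. Then for every p-linear form T on ℝ^N, each frame component T̂_{A_1…A_p} in the new frame equals T_{A_1…A_p} plus a finite linear combination, with coefficients polynomial in z, of frame components of T of boost weight strictly greater than the boost weight of T_{A_1…A_p}. In particular, the components whose boost weight equals the boost order of T (the leading terms) are unchanged, and the boost order of T with respect to the frame is invariant under null rotations about ℓ. -/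
/-- The Minkowski symmetric bilinear form of signature `(-,+,…,+)` on `ℝ^N`. -/
def eta {N : ℕ} (x y : Fin N → ℝ) : ℝ :=
  ∑ a : Fin N, (if (a : ℕ) = 0 then -(x a * y a) else x a * y a)

/-- A null frame `(ℓ, n, m_2, …, m_{N-1})` of `ℝ^N`: a basis consisting of two null
vectors `ℓ = f 0`, `n = f 1` with `η(ℓ,n) = 1` and spacelike vectors `m_i = f i`
(`2 ≤ i`) orthonormal and orthogonal to `ℓ` and `n`. -/
def IsNullFrame {N : ℕ} [NeZero N] (f : Fin N → Fin N → ℝ) : Prop :=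
  LinearIndependent ℝ f ∧
  eta (f 0) (f 0) = 0 ∧ eta (f 1) (f 1) = 0 ∧ eta (f 0) (f 1) = 1 ∧
  (∀ i j : Fin N, 2 ≤ (i : ℕ) → 2 ≤ (j : ℕ) →
      eta (f i) (f j) = if i = j then 1 else 0) ∧
  (∀ i : Fin N, 2 ≤ (i : ℕ) → eta (f 0) (f i) = 0 ∧ eta (f 1) (f i) = 0)

/-- Boost weight of a frame index: `b_0 = 1`, `b_1 = -1`, `b_i = 0` for spatial `i`. -/
def bw {N : ℕ} (A : Fin N) : ℤ :=
  if (A : ℕ) = 0 then 1 else if (A : ℕ) = 1 then -1 else 0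

open scoped Classical in
/-- The boost order of a `p`-linear form `T` with respect to the frame `f`: the maximum
boost weight over all nonvanishing frame components (`⊥`, i.e. `-∞`, if all vanish). -/
noncomputable def boostOrder {N : ℕ} (p : ℕ)
    (T : MultilinearMap ℝ (fun _ : Fin p => (Fin N → ℝ)) ℝ)
    (f : Fin N → Fin N → ℝ) : WithBot ℤ :=
  Finset.univ.sup fun A : Fin p → Fin N =>
    if T (fun k => f (A k)) = 0 then ⊥ else ((∑ k, bw (A k) : ℤ) : WithBot ℤ)

/-- The spatial index set `{2, …, N-1}`. -/
def sp (N : ℕ) : Finset (Fin N) := Finset.univ.filter (fun i => 2 ≤ (i : ℕ))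

/-- The null rotation about `ℓ` with parameters `z`:
`ℓ̂ = ℓ`, `m̂ᵢ = mᵢ + zᵢ ℓ`, `n̂ = n - ∑ᵢ zᵢ mᵢ - ½(∑ᵢ zᵢ²) ℓ`. -/
noncomputable def rotL {N : ℕ} [NeZero N] (f : Fin N → Fin N → ℝ) (z : Fin N → ℝ) :
    Fin N → Fin N → ℝ := fun A =>
  if (A : ℕ) = 0 then f 0
  else if (A : ℕ) = 1 then
    f 1 - (∑ i ∈ sp N, z i • f i) - ((1/2) * ∑ i ∈ sp N, (z i)^2) • f 0
  else f A + z A • f 0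

/-! The null rotation is unitriangular with respect to boost weight: each new frame vector is
the old one plus multiples of old frame vectors of strictly higher boost weight
(`m̂ᵢ - mᵢ ∝ ℓ`, `n̂ - n ∈ span (mᵢ, ℓ)`). Expanding `T` multilinearly, a product of
coefficients other than the diagonal one contains a weight-raising factor and no lowering one,
so it multiplies a component of strictly higher total weight. Hence components of weight equal
to the boost order receive only vanishing corrections, components above it stay zero, and the
boost order is unchanged. -/

open Finset MvPolynomial

theorem Finset.prod_eq_zero_of_unitriangular {R ι κ : Type*} [CommMonoidWithZero R] [Fintype κ]
    (w : ι → ℤ) {c : ι → ι → R}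
    (hc : ∀ i j, j ≠ i → ¬ w i < w j → c i j = 0) {A B : κ → ι} (hBA : B ≠ A)
    (hw : ¬ ∑ k, w (A k) < ∑ k, w (B k)) :
    ∏ k, c (A k) (B k) = 0 := by
  by_cases hstep : ∀ k, B k = A k ∨ w (A k) < w (B k)
  · obtain ⟨k, hk⟩ := Function.ne_iff.1 hBA
    refine absurd (sum_lt_sum (fun k _ => ?_) ⟨k, mem_univ k, (hstep k).resolve_left hk⟩) hw
    rcases hstep k with h | h
    · rw [h]
    · exact h.le
  · obtain ⟨k, hne, hle⟩ := by simpa only [not_forall, not_or, not_lt] using hstep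
    exact prod_eq_zero (mem_univ k) (hc _ _ hne hle.not_gt)

theorem MultilinearMap.map_eq_add_sum_of_unitriangular {R M P ι κ : Type*} [CommSemiring R]
    [AddCommMonoid M] [Module R M] [AddCommMonoid P] [Module R P] [Fintype ι] [DecidableEq ι]
    [Fintype κ] [DecidableEq κ] (T : MultilinearMap R (fun _ : κ => M) P)
    (w : ι → ℤ) {c : ι → ι → R} (hdiag : ∀ i, c i i = 1)
    (hc : ∀ i j, j ≠ i → ¬ w i < w j → c i j = 0) {f g : ι → M}
    (hg : ∀ i, g i = ∑ j, c i j • f j) (A : κ → ι) :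
    T (fun k => g (A k)) = T (fun k => f (A k)) +
      ∑ B ∈ univ.filter (fun B : κ → ι => ∑ k, w (A k) < ∑ k, w (B k)),
        (∏ k, c (A k) (B k)) • T (fun k => f (B k)) := by
  have hexpand : T (fun k => g (A k)) =
      ∑ B : κ → ι, (∏ k, c (A k) (B k)) • T (fun k => f (B k)) := by
    simp only [hg, T.map_sum, T.map_smul_univ]
  have hA : A ∉ univ.filter (fun B : κ → ι => ∑ k, w (A k) < ∑ k, w (B k)) := by simp
  rw [hexpand, ← sum_subset (subset_univ _), sum_insert hA]
  · simp [hdiag]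
  · intro B _ hB
    simp only [mem_insert, mem_filter, mem_univ, true_and, not_or] at hB
    rw [prod_eq_zero_of_unitriangular w hc hB.1 hB.2, zero_smul]

section BoostOrder

variable {N p : ℕ} (T : MultilinearMap ℝ (fun _ : Fin p => Fin N → ℝ) ℝ)

open scoped Classical in
theorem le_boostOrder (f : Fin N → Fin N → ℝ) {A : Fin p → Fin N}
    (hA : T (fun k => f (A k)) ≠ 0) :
    ((∑ k, bw (A k) : ℤ) : WithBot ℤ) ≤ boostOrder p T f := by
  have h := le_sup (f := fun A : Fin p → Fin N =>
    if T (fun k => f (A k)) = 0 then (⊥ : WithBot ℤ) else ((∑ k, bw (A k) : ℤ) : WithBot ℤ))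
    (mem_univ A)
  rwa [if_neg hA] at h

theorem eq_zero_of_boostOrder_lt (f : Fin N → Fin N → ℝ) {A : Fin p → Fin N}
    (hA : boostOrder p T f < ((∑ k, bw (A k) : ℤ) : WithBot ℤ)) :
    T (fun k => f (A k)) = 0 :=
  by_contra fun h => (le_boostOrder T f h).not_gt hA

open scoped Classical in
theorem exists_eq_boostOrder [NeZero N] (f : Fin N → Fin N → ℝ) (h : boostOrder p T f ≠ ⊥) :
    ∃ A : Fin p → Fin N, T (fun k => f (A k)) ≠ 0 ∧
      ((∑ k, bw (A k) : ℤ) : WithBot ℤ) = boostOrder p T f := by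
  obtain ⟨A, -, hA⟩ := exists_mem_eq_sup univ univ_nonempty fun A : Fin p → Fin N =>
    if T (fun k => f (A k)) = 0 then (⊥ : WithBot ℤ) else ((∑ k, bw (A k) : ℤ) : WithBot ℤ)
  have hA' : boostOrder p T f = _ := hA
  by_cases h0 : T (fun k => f (A k)) = 0
  · exact absurd (by rw [hA', if_pos h0]) h
  · exact ⟨A, h0, by rw [hA', if_neg h0]⟩

theorem map_eq_of_eq_boostOrder {f g : Fin N → Fin N → ℝ}
    (hg : ∀ A : Fin p → Fin N, (∀ B : Fin p → Fin N, ∑ k, bw (A k) < ∑ k, bw (B k) →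
      T (fun k => f (B k)) = 0) → T (fun k => g (A k)) = T (fun k => f (A k)))
    {A : Fin p → Fin N} (hA : ((∑ k, bw (A k) : ℤ) : WithBot ℤ) = boostOrder p T f) :
    T (fun k => g (A k)) = T (fun k => f (A k)) :=
  hg A fun _ hB => eq_zero_of_boostOrder_lt T f (hA ▸ WithBot.coe_lt_coe.2 hB)

theorem boostOrder_eq_of_map_eq [NeZero N] {f g : Fin N → Fin N → ℝ}
    (hg : ∀ A : Fin p → Fin N, (∀ B : Fin p → Fin N, ∑ k, bw (A k) < ∑ k, bw (B k) →
      T (fun k => f (B k)) = 0) → T (fun k => g (A k)) = T (fun k => f (A k))) :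
    boostOrder p T g = boostOrder p T f := by
  apply le_antisymm
  · refine Finset.sup_le fun A _ => ?_
    split_ifs with hgA
    · exact bot_le
    · by_contra hlt
      have hlt : boostOrder p T f < ((∑ k, bw (A k) : ℤ) : WithBot ℤ) := not_le.1 hlt
      refine hgA ((hg A fun B hB => ?_).trans (eq_zero_of_boostOrder_lt T f hlt))
      exact eq_zero_of_boostOrder_lt T f (hlt.trans (WithBot.coe_lt_coe.2 hB))
  · by_cases hbot : boostOrder p T f = ⊥
    · exact hbot ▸ bot_le
    obtain ⟨A, hfA, hA⟩ := exists_eq_boostOrder T f hbot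
    rw [← hA]
    exact le_boostOrder T g (map_eq_of_eq_boostOrder T hg hA ▸ hfA)

end BoostOrder

noncomputable def rotCoeff (N : ℕ) [NeZero N] (A B : Fin N) : MvPolynomial (Fin N) ℝ :=
  (if B = A then 1 else 0) +
    if (A : ℕ) = 0 then 0
    else if (A : ℕ) = 1 then
      (if B = 0 then -(C (1 / 2) * ∑ i ∈ sp N, X i ^ 2) else 0) - if 2 ≤ (B : ℕ) then X B else 0
    else if B = 0 then X A else 0

section NullRotation

variable {N : ℕ} [NeZero N]

theorem rotCoeff_self (A : Fin N) : rotCoeff N A A = 1 := by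
  simp only [rotCoeff, ← Fin.val_eq_zero_iff]
  split_ifs <;> first | omega | simp

theorem rotCoeff_eq_zero {A B : Fin N} (hBA : B ≠ A) (hw : ¬ bw A < bw B) :
    rotCoeff N A B = 0 := by
  unfold bw at hw
  simp only [rotCoeff, if_neg hBA, ← Fin.val_eq_zero_iff, zero_add]
  split_ifs at hw ⊢ <;> first | omega | simp

theorem rotL_eq_sum_rotCoeff (f : Fin N → Fin N → ℝ) (z : Fin N → ℝ) (A : Fin N) :
    rotL f z A = ∑ B, eval z (rotCoeff N A B) • f B := by
  simp only [rotCoeff, map_add, map_sub, add_smul, sub_smul, sum_add_distrib,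
    apply_ite (eval z), ite_smul, map_one, map_zero, one_smul, zero_smul, sum_ite_eq', mem_univ,
    if_true]
  unfold rotL
  split_ifs with h0 h1
  · simp [Fin.val_eq_zero_iff.1 h0]
  · have hA : A = 1 := Fin.ext (by rw [Fin.val_one', h1, Nat.mod_eq_of_lt (h1 ▸ A.isLt)])
    subst hA
    simp only [sp, one_div, map_neg, map_mul, eval_C, map_sum, map_pow, eval_X, neg_smul,
      sum_sub_distrib, sum_ite_eq', mem_univ, ↓reduceIte, ← sum_filter]
    abel
  · simp

theorem MultilinearMap.map_rotL_eq_add_sum {p : ℕ}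
    (T : MultilinearMap ℝ (fun _ : Fin p => Fin N → ℝ) ℝ) (f : Fin N → Fin N → ℝ)
    (z : Fin N → ℝ) (A : Fin p → Fin N) :
    T (fun k => rotL f z (A k)) = T (fun k => f (A k)) +
      ∑ B ∈ univ.filter (fun B : Fin p → Fin N => ∑ k, bw (A k) < ∑ k, bw (B k)),
        eval z (∏ k, rotCoeff N (A k) (B k)) * T (fun k => f (B k)) := by
  simpa only [map_prod, smul_eq_mul] using
    T.map_eq_add_sum_of_unitriangular bw (c := fun A B => eval z (rotCoeff N A B))
      (fun A => by rw [rotCoeff_self, map_one])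
      (fun A B hBA hw => by rw [rotCoeff_eq_zero hBA hw, _root_.map_zero])
      (rotL_eq_sum_rotCoeff f z) A

end NullRotation

theorem stmt_3_general (N : ℕ) [NeZero N] (p : ℕ)
    (f : Fin N → Fin N → ℝ)
    (T : MultilinearMap ℝ (fun _ : Fin p => (Fin N → ℝ)) ℝ) :
    (∀ A : Fin p → Fin N, ∃ c : (Fin p → Fin N) → MvPolynomial (Fin N) ℝ,
      ∀ z : Fin N → ℝ,
        T (fun k => rotL f z (A k)) = T (fun k => f (A k)) +
          ∑ B ∈ Finset.univ.filter (fun B : Fin p → Fin N =>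
              (∑ k, bw (A k)) < ∑ k, bw (B k)),
            (MvPolynomial.eval z (c B)) * T (fun k => f (B k))) ∧
    (∀ z : Fin N → ℝ, ∀ A : Fin p → Fin N,
      ((∑ k, bw (A k) : ℤ) : WithBot ℤ) = boostOrder p T f →
        T (fun k => rotL f z (A k)) = T (fun k => f (A k))) ∧
    (∀ z : Fin N → ℝ, boostOrder p T (rotL f z) = boostOrder p T f) := by
  have hexpand := T.map_rotL_eq_add_sum f
  have hrot : ∀ (z : Fin N → ℝ) (A : Fin p → Fin N),
      (∀ B : Fin p → Fin N, ∑ k, bw (A k) < ∑ k, bw (B k) → T (fun k => f (B k)) = 0) →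
        T (fun k => rotL f z (A k)) = T (fun k => f (A k)) :=
    fun z A hA => by
      rw [hexpand z A, sum_eq_zero fun B hB => by rw [hA B (mem_filter.1 hB).2, mul_zero],
        add_zero]
  exact ⟨fun A => ⟨_, fun z => hexpand z A⟩, fun z _ hA => map_eq_of_eq_boostOrder T (hrot z) hA,
    fun z => boostOrder_eq_of_map_eq T (hrot z)⟩

/-- Under a null rotation about `ℓ`, each frame component of a
`p`-linear form `T` changes by a linear combination — with coefficients polynomial in
`z` — of components of strictly higher boost weight.  In particular the components of
maximal (= boost order) weight are unchanged, and the boost order is invariant under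
null rotations about `ℓ`. -/
theorem stmt_3 (N : ℕ) [NeZero N] (hN : 2 ≤ N) (p : ℕ)
    (f : Fin N → Fin N → ℝ) (hf : IsNullFrame f)
    (T : MultilinearMap ℝ (fun _ : Fin p => (Fin N → ℝ)) ℝ) :
    (∀ A : Fin p → Fin N, ∃ c : (Fin p → Fin N) → MvPolynomial (Fin N) ℝ,
      ∀ z : Fin N → ℝ,
        T (fun k => rotL f z (A k)) = T (fun k => f (A k)) +
          ∑ B ∈ Finset.univ.filter (fun B : Fin p → Fin N =>
              (∑ k, bw (A k)) < ∑ k, bw (B k)),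
            (MvPolynomial.eval z (c B)) * T (fun k => f (B k))) ∧
    (∀ z : Fin N → ℝ, ∀ A : Fin p → Fin N,
      ((∑ k, bw (A k) : ℤ) : WithBot ℤ) = boostOrder p T f →
        T (fun k => rotL f z (A k)) = T (fun k => f (A k))) ∧
    (∀ z : Fin N → ℝ, boostOrder p T (rotL f z) = boostOrder p T f) :=
  stmt_3_general N p f T
end

section
/- Let N ≥ 4, let W be a Weyl tensor on ℝ^N and let k be a nonzero null vector. Then the following are equivalent: (i) W(k,x,k,y) = 0 for all x, y ∈ ℝ^N with η(k,x) = η(k,y) = 0 (i.e., k is a WAND of W, meaning all boost-weight +2 frame components vanish in any null frame with ℓ = k); (ii) writing B(x,y) := W(x,k,k,y) and ⟨k,x⟩ := η(k,x), one has ⟨k,u⟩⟨k,v⟩B(x,y) − ⟨k,u⟩⟨k,y⟩B(x,v) − ⟨k,x⟩⟨k,v⟩B(u,y) + ⟨k,x⟩⟨k,y⟩B(u,v) = 0 for all u, x, y, v ∈ ℝ^N (the coordinate-free form of the alignment equation k^b k^c k_{[e}C_{a]bc[d}k_{f]} = 0). -/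
/-- A Weyl tensor on `ℝ^N`: a 4-linear form with the pair symmetries
`W(x,y,z,w) = -W(y,x,z,w) = W(z,w,x,y)`, the first Bianchi identity, and all
`η`-traces zero (the standard basis being `η`-orthonormal, the `η`-trace of
`(u,v) ↦ W(u,x,v,y)` is `∑ₐ η^{aa} W(eₐ,x,eₐ,y)` with `η^{00} = -1`, `η^{aa} = 1`). -/
def IsWeyl {N : ℕ} (W : MultilinearMap ℝ (fun _ : Fin 4 => (Fin N → ℝ)) ℝ) : Prop :=
  (∀ x y z w : Fin N → ℝ, W ![y, x, z, w] = - W ![x, y, z, w]) ∧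
  (∀ x y z w : Fin N → ℝ, W ![z, w, x, y] = W ![x, y, z, w]) ∧
  (∀ x y z w : Fin N → ℝ,
    W ![x, y, z, w] + W ![x, z, w, y] + W ![x, w, y, z] = 0) ∧
  (∀ x y : Fin N → ℝ,
    ∑ a : Fin N, (if (a : ℕ) = 0 then (-1 : ℝ) else 1) *
      W ![Pi.single a 1, x, Pi.single a 1, y] = 0)

/-! With `B(x,y) := W(x,k,k,y) = -W(k,x,k,y)` and `φ := η(k,·)`, the WAND condition says that `B`
vanishes on `ker φ × ker φ`. For `n` with `φ n = 1`, splitting `x = (x - φ(x) n) + φ(x) n` turns this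
into `B(x,y) = φ(y) B(x,n) + φ(x) B(n,y) - φ(x) φ(y) B(n,n)`, which makes the alignment expression
vanish identically; conversely, `u = v = n` in the alignment equation gives `B(x,y) = 0` on `ker φ`. -/

namespace LinearMap.BilinForm

variable {R V : Type*} [CommRing R] [AddCommGroup V] [Module R V]
  (B : LinearMap.BilinForm R V) (φ : Module.Dual R V) {n : V}

theorem apply_eq_of_eq_zero_on_ker (hn : φ n = 1)
    (hB : ∀ x y, φ x = 0 → φ y = 0 → B x y = 0) (x y : V) :
    B x y = φ y * B x n + φ x * B n y - φ x * φ y * B n n := by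
  have hker : ∀ z, φ (z - φ z • n) = 0 := fun z => by simp [hn]
  have h := hB _ _ (hker x) (hker y)
  simp only [map_sub, map_smul, LinearMap.sub_apply, LinearMap.smul_apply, smul_eq_mul] at h
  linear_combination h

theorem eq_zero_on_ker_iff (hn : φ n = 1) :
    (∀ x y, φ x = 0 → φ y = 0 → B x y = 0) ↔
      ∀ u x y v, φ u * φ v * B x y - φ u * φ y * B x v - φ x * φ v * B u y
        + φ x * φ y * B u v = 0 := by
  refine ⟨fun hB u x y v => ?_, fun h x y hx hy => ?_⟩
  · have hdecomp := apply_eq_of_eq_zero_on_ker B φ hn hB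
    rw [hdecomp x y, hdecomp x v, hdecomp u y, hdecomp u v]
    ring
  · simpa [hn, hx, hy] using h n x y n

end LinearMap.BilinForm

namespace MultilinearMap

variable {R M : Type*} [CommRing R] [AddCommGroup M] [Module R M]

def outerBilin (W : MultilinearMap R (fun _ : Fin 4 => M) R) (a b : M) :
    LinearMap.BilinForm R M :=
  LinearMap.mk₂ R (fun x y => W ![x, a, b, y])
    (fun x x' y => W.cons_add ![a, b, y] x x')
    (fun c x y => W.cons_smul ![a, b, y] c x)
    (fun x y y' => by simpa using W.snoc_add ![x, a, b] y y')
    (fun c x y => by simpa using W.snoc_smul ![x, a, b] c y)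

@[simp]
theorem outerBilin_apply (W : MultilinearMap R (fun _ : Fin 4 => M) R) (a b x y : M) :
    W.outerBilin a b x y = W ![x, a, b, y] :=
  rfl

end MultilinearMap

section Minkowski

variable {N : ℕ}

def lowerIndex (x : Fin N → ℝ) : Fin N → ℝ :=
  fun a => if (a : ℕ) = 0 then -x a else x a

theorem eta_eq_lowerIndex_dotProduct (x y : Fin N → ℝ) : eta x y = lowerIndex x ⬝ᵥ y := by
  refine Finset.sum_congr rfl fun a _ => ?_
  by_cases ha : (a : ℕ) = 0 <;> simp [lowerIndex, ha, mul_comm]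

theorem lowerIndex_ne_zero {x : Fin N → ℝ} (hx : x ≠ 0) : lowerIndex x ≠ 0 := by
  contrapose! hx
  ext a
  have ha := congr_fun hx a
  by_cases h : (a : ℕ) = 0 <;> simpa [lowerIndex, h] using ha

theorem exists_eta_eq_one {k : Fin N → ℝ} (hk : k ≠ 0) : ∃ n, eta k n = 1 := by
  have hself : lowerIndex k ⬝ᵥ lowerIndex k ≠ 0 :=
    dotProduct_self_eq_zero.not.mpr (lowerIndex_ne_zero hk)
  exact ⟨(lowerIndex k ⬝ᵥ lowerIndex k)⁻¹ • lowerIndex k, by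
    rw [eta_eq_lowerIndex_dotProduct, dotProduct_smul, smul_eq_mul, inv_mul_cancel₀ hself]⟩

def etaLeft (k : Fin N → ℝ) : Module.Dual ℝ (Fin N → ℝ) :=
  dotProductBilin ℝ ℝ (lowerIndex k)

@[simp]
theorem etaLeft_apply (k x : Fin N → ℝ) : etaLeft k x = eta k x := by
  rw [eta_eq_lowerIndex_dotProduct]
  rfl

end Minkowski

theorem stmt_9_general (N : ℕ)
    (W : MultilinearMap ℝ (fun _ : Fin 4 => (Fin N → ℝ)) ℝ) (hW : IsWeyl W)
    (k : Fin N → ℝ) (hk : k ≠ 0) :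
    (∀ x y : Fin N → ℝ, eta k x = 0 → eta k y = 0 → W ![k, x, k, y] = 0) ↔
    (∀ u x y v : Fin N → ℝ,
      eta k u * eta k v * W ![x, k, k, y] - eta k u * eta k y * W ![x, k, k, v]
        - eta k x * eta k v * W ![u, k, k, y]
        + eta k x * eta k y * W ![u, k, k, v] = 0) := by
  obtain ⟨n, hn⟩ := exists_eta_eq_one hk
  have hwand : (∀ x y : Fin N → ℝ, eta k x = 0 → eta k y = 0 → W ![k, x, k, y] = 0) ↔
      ∀ x y, etaLeft k x = 0 → etaLeft k y = 0 → W.outerBilin k k x y = 0 := by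
    simp only [etaLeft_apply, MultilinearMap.outerBilin_apply, hW.1 _ k k _, neg_eq_zero]
  rw [hwand, (W.outerBilin k k).eq_zero_on_ker_iff (etaLeft k) (n := n) (by simpa using hn)]
  simp only [etaLeft_apply, MultilinearMap.outerBilin_apply]

/-- For a Weyl tensor `W` and a nonzero null vector `k`, `k` is a
WAND of `W` (all boost-weight `+2` components vanish) if and only if the coordinate-free
alignment equation `k^b k^c k_{[e} C_{a]bc[d} k_{f]} = 0` holds, i.e. with
`B(x,y) := W(x,k,k,y)` and `⟨k,x⟩ := η(k,x)`:
`⟨k,u⟩⟨k,v⟩B(x,y) - ⟨k,u⟩⟨k,y⟩B(x,v) - ⟨k,x⟩⟨k,v⟩B(u,y) + ⟨k,x⟩⟨k,y⟩B(u,v) = 0`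
for all `u, x, y, v`. -/
theorem stmt_9 (N : ℕ) [NeZero N] (hN : 4 ≤ N)
    (W : MultilinearMap ℝ (fun _ : Fin 4 => (Fin N → ℝ)) ℝ) (hW : IsWeyl W)
    (k : Fin N → ℝ) (hk : k ≠ 0) (hnull : eta k k = 0) :
    (∀ x y : Fin N → ℝ, eta k x = 0 → eta k y = 0 → W ![k, x, k, y] = 0) ↔
    (∀ u x y v : Fin N → ℝ,
      eta k u * eta k v * W ![x, k, k, y] - eta k u * eta k y * W ![x, k, k, v]
        - eta k x * eta k v * W ![u, k, k, y]
        + eta k x * eta k y * W ![u, k, k, v] = 0) :=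
  stmt_9_general N W hW k hk
end

section
/- Let N ≥ 4, let W be a Weyl tensor on ℝ^N and fix a null frame (ℓ, n, m_2, …, m_{N−1}). For z ∈ ℝ^{N−2} set k(z) = ℓ − ½(Σ_i z_i²) n + Σ_i z_i m_i and m̂_i(z) = m_i − z_i n (so that (k(z), n, m̂_i(z)) is again a null frame). Then for each pair (i,j), the top alignment component z ↦ W(k(z), m̂_i(z), k(z), m̂_j(z)) is a polynomial function of z = (z_2, …, z_{N−1}) of degree at most 4; thus the alignment equations form a system of degree-4 polynomial equations in N−2 variables. -/
open MvPolynomial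

theorem MultilinearMap.exists_totalDegree_le_eval_eq
    {R σ ι κ M : Type*} [CommSemiring R] [Fintype ι] [DecidableEq ι] [Fintype κ]
    [AddCommMonoid M] [Module R M]
    (W : MultilinearMap R (fun _ : ι => M) R) (e : κ → M) (q : ι → κ → MvPolynomial σ R)
    (δ : ι → κ → ℕ) (d : ℕ) (hq : ∀ a t, (q a t).totalDegree ≤ δ a t)
    (hδ : ∀ r : ι → κ, W (e ∘ r) ≠ 0 → ∑ a, δ a (r a) ≤ d) :
    ∃ P : MvPolynomial σ R, P.totalDegree ≤ d ∧
      ∀ z, eval z P = W (fun a => ∑ t, eval z (q a t) • e t) := by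
  refine ⟨∑ r : ι → κ, C (W (e ∘ r)) * ∏ a, q a (r a), ?_, fun z => ?_⟩
  · refine (totalDegree_finsetSum _ _).trans (Finset.sup_le fun r _ => ?_)
    by_cases hr : W (e ∘ r) = 0
    · simp [hr]
    calc (C (W (e ∘ r)) * ∏ a, q a (r a)).totalDegree
        ≤ (C (W (e ∘ r))).totalDegree + (∏ a, q a (r a)).totalDegree := totalDegree_mul _ _
      _ ≤ 0 + ∑ a, δ a (r a) :=
          add_le_add (totalDegree_C _).le
            ((totalDegree_finsetProd _ _).trans (Finset.sum_le_sum fun a _ => hq a (r a)))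
      _ ≤ d := by simpa using hδ r hr
  · rw [MultilinearMap.map_sum, _root_.map_sum]
    refine Finset.sum_congr rfl fun r _ => ?_
    rw [MultilinearMap.map_smul_univ, map_mul, eval_C, map_prod, smul_eq_mul, mul_comm]
    rfl

namespace IsWeyl

variable {N : ℕ} {W : MultilinearMap ℝ (fun _ : Fin 4 => (Fin N → ℝ)) ℝ}

theorem apply_self_fst_pair (hW : IsWeyl W) (x y w : Fin N → ℝ) : W ![x, x, y, w] = 0 := by
  have := hW.1 x x y w
  linarith

theorem apply_self_snd_pair (hW : IsWeyl W) (x y w : Fin N → ℝ) : W ![x, y, w, w] = 0 := by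
  rw [← hW.2.1, hW.apply_self_fst_pair]

theorem ne_of_apply_comp_ne_zero (hW : IsWeyl W) {f : Fin N → Fin N → ℝ} {r : Fin 4 → Fin N}
    (hr : W (f ∘ r) ≠ 0) : r 0 ≠ r 1 ∧ r 2 ≠ r 3 := by
  have hfr : f ∘ r = ![f (r 0), f (r 1), f (r 2), f (r 3)] := by
    ext a : 1
    fin_cases a <;> rfl
  rw [hfr] at hr
  constructor <;> intro h <;> rw [h] at hr
  · exact hr (hW.apply_self_fst_pair _ _ _)
  · exact hr (hW.apply_self_snd_pair _ _ _)

end IsWeyl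

theorem totalDegree_C_mul_sum_X_sq_le {σ R : Type*} [CommSemiring R] [Nontrivial R]
    (c : R) (s : Finset σ) : (C c * ∑ l ∈ s, X l ^ 2 : MvPolynomial σ R).totalDegree ≤ 2 := by
  refine (totalDegree_mul _ _).trans ?_
  rw [totalDegree_C, zero_add]
  exact (totalDegree_finsetSum _ _).trans (Finset.sup_le fun l _ => (totalDegree_X_pow l 2).le)

section NullRotation

variable {N : ℕ} [NeZero N]

variable (N) in
noncomputable def kCoeff (t : Fin N) : MvPolynomial (Fin N) ℝ :=
  (if t = 0 then 1 else 0) + (if t = 1 then C (-(1 / 2)) * ∑ l ∈ sp N, X l ^ 2 else 0) +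
    if t ∈ sp N then X t else 0

noncomputable def mHatCoeff (i t : Fin N) : MvPolynomial (Fin N) ℝ :=
  (if t = i then 1 else 0) - if t = 1 then X i else 0

theorem sum_eval_kCoeff_smul (f : Fin N → Fin N → ℝ) (z : Fin N → ℝ) :
    ∑ t, eval z (kCoeff N t) • f t =
      f 0 - ((1 / 2) * ∑ l ∈ sp N, (z l) ^ 2) • f 1 + ∑ l ∈ sp N, z l • f l := by
  simp only [kCoeff, map_add, apply_ite (eval z), ite_smul, add_smul, Finset.sum_add_distrib]
  simp only [map_one, one_smul, map_zero, zero_smul, Finset.sum_ite_eq', Finset.mem_univ,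
    ↓reduceIte, map_mul, eval_C, map_sum, map_pow, eval_X, Finset.sum_ite_mem, Finset.univ_inter]
  module

theorem sum_eval_mHatCoeff_smul (f : Fin N → Fin N → ℝ) (z : Fin N → ℝ) (i : Fin N) :
    ∑ t, eval z (mHatCoeff i t) • f t = f i - z i • f 1 := by
  simp only [mHatCoeff, map_sub, apply_ite (eval z), ite_smul, sub_smul, Finset.sum_sub_distrib]
  simp

theorem totalDegree_kCoeff_le (t : Fin N) :
    (kCoeff N t).totalDegree ≤ if t = 1 then 2 else 1 := by
  have := totalDegree_C_mul_sum_X_sq_le (-(1 / 2) : ℝ) (sp N)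
  refine (totalDegree_add _ _).trans (max_le ((totalDegree_add _ _).trans (max_le ?_ ?_)) ?_) <;>
    split_ifs <;> simp_all

theorem totalDegree_mHatCoeff_le (i t : Fin N) :
    (mHatCoeff i t).totalDegree ≤ if t = 1 then 1 else 0 := by
  refine (totalDegree_sub _ _).trans (max_le ?_ ?_) <;> split_ifs <;> simp

end NullRotation

theorem stmt_10_general (N : ℕ) [NeZero N]
    (W : MultilinearMap ℝ (fun _ : Fin 4 => (Fin N → ℝ)) ℝ) (hW : IsWeyl W)
    (f : Fin N → Fin N → ℝ)
    (i j : Fin N) :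
    ∃ P : MvPolynomial (Fin N) ℝ, P.totalDegree ≤ 4 ∧
      ∀ z : Fin N → ℝ,
        MvPolynomial.eval z P =
          W ![f 0 - ((1/2) * ∑ l ∈ sp N, (z l)^2) • f 1 + ∑ l ∈ sp N, z l • f l,
              f i - z i • f 1,
              f 0 - ((1/2) * ∑ l ∈ sp N, (z l)^2) • f 1 + ∑ l ∈ sp N, z l • f l,
              f j - z j • f 1] := by
  let kDeg : Fin N → ℕ := fun t => if t = 1 then 2 else 1
  let mHatDeg : Fin N → ℕ := fun t => if t = 1 then 1 else 0
  obtain ⟨P, hP, hPz⟩ := W.exists_totalDegree_le_eval_eq f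
    ![kCoeff N, mHatCoeff i, kCoeff N, mHatCoeff j] ![kDeg, mHatDeg, kDeg, mHatDeg] 4
    (fun a t => by
      fin_cases a
      exacts [totalDegree_kCoeff_le t, totalDegree_mHatCoeff_le i t, totalDegree_kCoeff_le t,
        totalDegree_mHatCoeff_le j t])
    (fun r hr => by
      have ⟨h01, h23⟩ := hW.ne_of_apply_comp_ne_zero hr
      simp only [Fin.sum_univ_four, Matrix.cons_val, kDeg, mHatDeg]
      split_ifs <;> simp_all)
  refine ⟨P, hP, fun z => ?_⟩
  rw [hPz]
  congr 1
  ext a : 1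
  fin_cases a <;> simp [sum_eval_kCoeff_smul, sum_eval_mHatCoeff_smul]

/-- For `z ∈ ℝ^{N-2}` let
`k(z) = ℓ - ½(∑ᵢ zᵢ²) n + ∑ᵢ zᵢ mᵢ` and `m̂ᵢ(z) = mᵢ - zᵢ n` (a null rotation about
`n`).  Then each top alignment component `z ↦ W(k(z), m̂ᵢ(z), k(z), m̂ⱼ(z))` is a
polynomial in `z` of (total) degree at most `4`: the alignment equations form a system
of degree-4 polynomial equations in `N-2` variables. -/
theorem stmt_10 (N : ℕ) [NeZero N] (hN : 4 ≤ N)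
    (W : MultilinearMap ℝ (fun _ : Fin 4 => (Fin N → ℝ)) ℝ) (hW : IsWeyl W)
    (f : Fin N → Fin N → ℝ) (hf : IsNullFrame f)
    (i j : Fin N) (hi : 2 ≤ (i : ℕ)) (hj : 2 ≤ (j : ℕ)) :
    ∃ P : MvPolynomial (Fin N) ℝ, P.totalDegree ≤ 4 ∧
      ∀ z : Fin N → ℝ,
        MvPolynomial.eval z P =
          W ![f 0 - ((1/2) * ∑ l ∈ sp N, (z l)^2) • f 1 + ∑ l ∈ sp N, z l • f l,
              f i - z i • f 1,
              f 0 - ((1/2) * ∑ l ∈ sp N, (z l)^2) • f 1 + ∑ l ∈ sp N, z l • f l,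
              f j - z j • f 1] :=
  stmt_10_general N W hW f i j
end

section
/- Let N = 4. Then every Weyl tensor W on ℝ^4 possesses at least one aligned null direction: there exists a nonzero vector k with η(k,k) = 0 such that W(k,x,k,y) = 0 for all x, y ∈ ℝ^4 with η(k,x) = η(k,y) = 0. -/
/-!
Take the null frame `ℓ = (1,1,0,0)`, `n = (-1/2,1/2,0,0)`, `m₂ = e₂`, `m₃ = e₃` and
parametrize the null directions other than `n` stereographically by `z ∈ ℂ`:
`k(z) = ℓ + Re z • m₂ + Im z • m₃ - |z|²/2 • n`, completed to the null frame `(k, n, u, v)`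
with `u = m₂ - Re z • n`, `v = m₃ - Im z • n`. Since `W` is trace-free in every null frame,
`W(k,u,k,u) + W(k,v,k,v) = 0`, so `k` is a WAND as soon as the complex number
`Ψ(z) = W(k, u + iv, k, u + iv)` vanishes (`W` extended complex-multilinearly).

Write `m = u + iv = m₂ + i m₃ - z n` and `k = p + (z̄/2) m` with `p = ℓ + (z/2)(m₂ - i m₃)`.
As `W(m,m,·,·) = W(·,·,m,m) = 0`, `Ψ(z) = W(p, m, p, m)`, which is a polynomial of degree at
most four in `z` alone. If its `z⁴` coefficient vanishes, the same argument shows that `-n` is a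
WAND; otherwise `Ψ` has a root by the fundamental theorem of algebra.
-/

open Complex (I)

namespace MultilinearMap

section FourSlots

variable {R M N : Type*} [CommSemiring R] [AddCommMonoid M] [Module R M] [AddCommMonoid N]
  [Module R N] (f : MultilinearMap R (fun _ : Fin 4 => M) N) (x y z w v : M) (c : R)

theorem map_add_slot₀ : f ![x + v, y, z, w] = f ![x, y, z, w] + f ![v, y, z, w] :=
  f.cons_add _ x v

theorem map_add_slot₁ : f ![x, y + v, z, w] = f ![x, y, z, w] + f ![x, v, z, w] :=
  (f.curryLeft x).cons_add _ y v

theorem map_add_slot₂ : f ![x, y, z + v, w] = f ![x, y, z, w] + f ![x, y, v, w] :=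
  ((f.curryLeft x).curryLeft y).cons_add _ z v

theorem map_add_slot₃ : f ![x, y, z, w + v] = f ![x, y, z, w] + f ![x, y, z, v] :=
  (((f.curryLeft x).curryLeft y).curryLeft z).cons_add _ w v

theorem map_smul_slot₀ : f ![c • x, y, z, w] = c • f ![x, y, z, w] :=
  f.cons_smul _ c x

theorem map_smul_slot₁ : f ![x, c • y, z, w] = c • f ![x, y, z, w] :=
  (f.curryLeft x).cons_smul _ c y

theorem map_smul_slot₂ : f ![x, y, c • z, w] = c • f ![x, y, z, w] :=
  ((f.curryLeft x).curryLeft y).cons_smul _ c z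

theorem map_smul_slot₃ : f ![x, y, z, c • w] = c • f ![x, y, z, w] :=
  (((f.curryLeft x).curryLeft y).curryLeft z).cons_smul _ c w

def bilin₀₂ : M →ₗ[R] M →ₗ[R] N :=
  LinearMap.mk₂ R (fun p q => f ![p, x, q, y]) (fun _ _ _ => f.map_add_slot₀ ..)
    (fun _ _ _ => f.map_smul_slot₀ ..) (fun _ _ _ => f.map_add_slot₂ ..)
    (fun _ _ _ => f.map_smul_slot₂ ..)

@[simp]
theorem bilin₀₂_apply (p q : M) : f.bilin₀₂ x y p q = f ![p, x, q, y] := rfl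

end FourSlots

section FourSlotsSymmetry

variable {R M : Type*} [CommRing R] [AddCommGroup M] [Module R M]
  {f : MultilinearMap R (fun _ : Fin 4 => M) R}

theorem map_swap₀₁ (h : f.domDomCongr (Equiv.swap 0 1) = -f) (x y z w : M) :
    f ![y, x, z, w] = -f ![x, y, z, w] := by
  have hv : (fun i => ![x, y, z, w] (Equiv.swap 0 1 i)) = ![y, x, z, w] := by
    funext i; fin_cases i <;> rfl
  rw [← hv]
  exact congr($h ![x, y, z, w])

theorem map_swap₂₃ (h : f.domDomCongr (Equiv.swap 2 3) = -f) (x y z w : M) :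
    f ![x, y, w, z] = -f ![x, y, z, w] := by
  have hv : (fun i => ![x, y, z, w] (Equiv.swap 2 3 i)) = ![x, y, w, z] := by
    funext i; fin_cases i <;> rfl
  rw [← hv]
  exact congr($h ![x, y, z, w])

theorem domDomCongr_swap₀₁_eq_neg (hanti : ∀ x y z w, f ![y, x, z, w] = -f ![x, y, z, w]) :
    f.domDomCongr (Equiv.swap 0 1) = -f := by
  refine MultilinearMap.ext fun v => ?_
  have hv : v = ![v 0, v 1, v 2, v 3] := by funext i; fin_cases i <;> rfl
  have hσv : (fun i => v (Equiv.swap 0 1 i)) = ![v 1, v 0, v 2, v 3] := by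
    funext i; fin_cases i <;> rfl
  rw [domDomCongr_apply, hσv, neg_apply]
  conv_rhs => rw [hv]
  exact hanti ..

theorem domDomCongr_swap₂₃_eq_neg (hanti : ∀ x y z w, f ![y, x, z, w] = -f ![x, y, z, w])
    (hpair : ∀ x y z w, f ![z, w, x, y] = f ![x, y, z, w]) :
    f.domDomCongr (Equiv.swap 2 3) = -f := by
  refine MultilinearMap.ext fun v => ?_
  have hv : v = ![v 0, v 1, v 2, v 3] := by funext i; fin_cases i <;> rfl
  have hσv : (fun i => v (Equiv.swap 2 3 i)) = ![v 0, v 1, v 3, v 2] := by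
    funext i; fin_cases i <;> rfl
  rw [domDomCongr_apply, hσv, neg_apply]
  conv_rhs => rw [hv]
  rw [← hpair, hanti, hpair]

theorem map_add_smul_self [NoZeroDivisors R] [CharZero R]
    (h₀₁ : f.domDomCongr (Equiv.swap 0 1) = -f) (h₂₃ : f.domDomCongr (Equiv.swap 2 3) = -f)
    (p m : M) (c : R) :
    f ![p + c • m, m, p + c • m, m] = f ![p, m, p, m] := by
  have h₀₁' (z w : M) : f ![m, m, z, w] = 0 := self_eq_neg.mp (map_swap₀₁ h₀₁ m m z w)
  have h₂₃' (x y : M) : f ![x, y, m, m] = 0 := self_eq_neg.mp (map_swap₂₃ h₂₃ x y m m)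
  simp [map_add_slot₀, map_add_slot₂, map_smul_slot₀, map_smul_slot₂, h₀₁', h₂₃']

end FourSlotsSymmetry

open Polynomial in
theorem exists_map_add_smul_eq_zero {ι κ : Type*} [Fintype ι] [DecidableEq ι] [Nonempty ι]
    (f : MultilinearMap ℂ (fun _ : ι => κ → ℂ) ℂ) (a b : ι → κ → ℂ) (hb : f b ≠ 0) :
    ∃ z : ℂ, f (fun i => a i + z • b i) = 0 := by
  set P : ℂ[X] := ∑ s : Finset ι, C (f (s.piecewise b a)) * X ^ s.card
  have heval (z : ℂ) : P.eval z = f (fun i => a i + z • b i) := by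
    have hpiece (s : Finset ι) : s.piecewise (fun i => z • b i) a =
        s.piecewise (fun i => z • s.piecewise b a i) (s.piecewise b a) := by
      ext i; by_cases hi : i ∈ s <;> simp [hi]
    have hexpand := f.map_add_univ (fun i => z • b i) a
    simp only [hpiece, map_piecewise_smul, Finset.prod_const, smul_eq_mul] at hexpand
    rw [show (fun i => a i + z • b i) = (fun i => z • b i) + a by ext; simp [add_comm], hexpand]
    simp only [P, eval_finsetSum, eval_mul, eval_C, eval_pow, eval_X]
    exact Finset.sum_congr rfl fun _ _ => mul_comm _ _
  have hcoeff : P.coeff (Fintype.card ι) = f b := by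
    simp only [P, finsetSum_coeff, coeff_C_mul_X_pow]
    rw [Finset.sum_eq_single Finset.univ]
    · simp
    · intro s _ hs
      rw [if_neg]
      rwa [eq_comm, Finset.card_eq_iff_eq_univ]
    · simp
  have hdeg : 0 < P.degree :=
    lt_of_lt_of_le (by exact_mod_cast Fintype.card_pos) (le_degree_of_ne_zero (hcoeff ▸ hb))
  obtain ⟨z, hz⟩ := Complex.exists_root hdeg
  exact ⟨z, heval z ▸ hz⟩

section Complexify

variable {ι κ : Type*} [Fintype ι] [DecidableEq ι] [Fintype κ] [DecidableEq κ]

noncomputable def complexify (W : MultilinearMap ℝ (fun _ : ι => κ → ℝ) ℝ) :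
    MultilinearMap ℂ (fun _ : ι => κ → ℂ) ℂ :=
  ∑ r : ι → κ, (W fun i => Pi.single (r i) 1 : ℂ) •
    (MultilinearMap.mkPiAlgebra ℂ ι ℂ).compLinearMap fun i => LinearMap.proj (r i)

variable (W : MultilinearMap ℝ (fun _ : ι => κ → ℝ) ℝ)

theorem complexify_apply (v : ι → κ → ℂ) :
    W.complexify v = ∑ r : ι → κ, (W fun i => Pi.single (r i) 1 : ℂ) * ∏ i, v i (r i) := by
  simp [complexify]

theorem complexify_apply_ofReal (x : ι → κ → ℝ) :
    W.complexify (fun i j => (x i j : ℂ)) = W x := by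
  have hx : x = fun i => ∑ j, x i j • (Pi.single j 1 : κ → ℝ) := by
    ext i l; simp [Pi.single_apply]
  conv_rhs => rw [hx, W.map_sum]
  simp [complexify_apply, W.map_smul_univ, mul_comm]

theorem complexify_neg : (-W).complexify = -W.complexify := by
  ext v; simp [complexify_apply]

theorem complexify_domDomCongr (σ : ι ≃ ι) :
    (W.domDomCongr σ).complexify = W.complexify.domDomCongr σ := by
  refine Module.Basis.ext_multilinear (fun _ => Pi.basisFun ℂ κ) fun r => ?_
  have hsingle (j : κ) :
      Pi.basisFun ℂ κ j = fun l => ((Pi.single j (1 : ℝ) : κ → ℝ) l : ℂ) := by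
    ext l; by_cases hl : l = j <;> simp [hl]
  simp only [hsingle, domDomCongr_apply, complexify_apply_ofReal]

end Complexify

section ComplexifyFourSlots

variable {κ : Type*} [Fintype κ] [DecidableEq κ] (W : MultilinearMap ℝ (fun _ : Fin 4 => κ → ℝ) ℝ)

theorem complexify_apply_ofReal_vec4 (x y z w : κ → ℝ) :
    W.complexify ![fun j => (x j : ℂ), fun j => y j, fun j => z j, fun j => w j] =
      W ![x, y, z, w] := by
  rw [← complexify_apply_ofReal]
  congr 1; funext i; fin_cases i <;> rfl

theorem complexify_apply_add_mul_I (hpair : ∀ x y z w, W ![z, w, x, y] = W ![x, y, z, w])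
    (k u v : κ → ℝ) :
    W.complexify ![fun j => (k j : ℂ), fun j => u j + I * v j, fun j => k j,
        fun j => u j + I * v j] =
      (W ![k, u, k, u] - W ![k, v, k, v] : ℝ) + (2 * W ![k, u, k, v] : ℝ) * I := by
  have huv : (fun j => (u j : ℂ) + I * v j) = (fun j => (u j : ℂ)) + I • fun j => (v j : ℂ) :=
    rfl
  rw [huv]
  simp only [map_add_slot₁, map_add_slot₃, map_smul_slot₁, map_smul_slot₃,
    complexify_apply_ofReal_vec4, smul_eq_mul, hpair k u k v]
  push_cast
  linear_combination (W ![k, v, k, v] : ℂ) * Complex.I_sq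

variable {W}

theorem complexify_domDomCongr_swap₀₁_eq_neg
    (hanti : ∀ x y z w, W ![y, x, z, w] = -W ![x, y, z, w]) :
    W.complexify.domDomCongr (Equiv.swap 0 1) = -W.complexify := by
  rw [← complexify_domDomCongr, domDomCongr_swap₀₁_eq_neg hanti, complexify_neg]

theorem complexify_domDomCongr_swap₂₃_eq_neg
    (hanti : ∀ x y z w, W ![y, x, z, w] = -W ![x, y, z, w])
    (hpair : ∀ x y z w, W ![z, w, x, y] = W ![x, y, z, w]) :
    W.complexify.domDomCongr (Equiv.swap 2 3) = -W.complexify := by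
  rw [← complexify_domDomCongr, domDomCongr_swap₂₃_eq_neg hanti hpair, complexify_neg]

end ComplexifyFourSlots

end MultilinearMap

def minkowskiSign {N : ℕ} (a : Fin N) : ℝ := if (a : ℕ) = 0 then -1 else 1

theorem eta_single {N : ℕ} (y : Fin N → ℝ) (a : Fin N) :
    eta y (Pi.single a 1) = minkowskiSign a * y a := by
  rw [eta, Finset.sum_eq_single a]
  · unfold minkowskiSign; split_ifs <;> simp
  · intro b _ hb; simp [hb]
  · simp

theorem sum_minkowskiSign_mul_eta_single_smul {N : ℕ} (y : Fin N → ℝ) :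
    ∑ a : Fin N, (minkowskiSign a * eta y (Pi.single a 1)) • Pi.single a 1 = y := by
  ext i
  rw [Finset.sum_apply, Finset.sum_eq_single i]
  · rw [eta_single, minkowskiSign]
    split_ifs <;> simp
  · intro b _ hb
    simp [hb.symm]
  · simp

/-- The left-hand side is the `η`-trace of `β`; `hfg` says that `g` is `η`-dual to `f`. -/
theorem sum_minkowskiSign_mul_eq_of_complete {N : ℕ} {P : Type*} [Fintype P]
    (β : (Fin N → ℝ) →ₗ[ℝ] (Fin N → ℝ) →ₗ[ℝ] ℝ) (f g : P → Fin N → ℝ)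
    (hfg : ∀ x, x = ∑ p, eta (g p) x • f p) :
    ∑ a : Fin N, minkowskiSign a * β (Pi.single a 1) (Pi.single a 1) = ∑ p, β (g p) (f p) := by
  calc _ = ∑ a : Fin N, ∑ p,
          β ((minkowskiSign a * eta (g p) (Pi.single a 1)) • Pi.single a 1) (f p) := by
        refine Finset.sum_congr rfl fun a _ => ?_
        nth_rw 2 [hfg (Pi.single a 1)]
        simp only [map_sum, map_smul, LinearMap.smul_apply, smul_eq_mul, Finset.mul_sum]
        exact Finset.sum_congr rfl fun _ _ => by ring
    _ = ∑ p, β (g p) (f p) := by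
        rw [Finset.sum_comm]
        simp only [← LinearMap.sum_apply, ← map_sum, sum_minkowskiSign_mul_eta_single_smul]

open MultilinearMap

def IsWAND {N : ℕ} (W : MultilinearMap ℝ (fun _ : Fin 4 => Fin N → ℝ) ℝ) (k : Fin N → ℝ) :
    Prop :=
  k ≠ 0 ∧ eta k k = 0 ∧ ∀ x y, eta k x = 0 → eta k y = 0 → W ![k, x, k, y] = 0

theorem isWAND_of_null_frame {N : ℕ} (W : MultilinearMap ℝ (fun _ : Fin 4 => Fin N → ℝ) ℝ)
    (hanti : ∀ x y z w, W ![y, x, z, w] = -W ![x, y, z, w])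
    (hpair : ∀ x y z w, W ![z, w, x, y] = W ![x, y, z, w])
    (htrace : ∀ x y, ∑ a : Fin N, minkowskiSign a * W ![Pi.single a 1, x, Pi.single a 1, y] = 0)
    {k l u v : Fin N → ℝ} (hk : k ≠ 0) (hkk : eta k k = 0)
    (hframe : ∀ x, x = eta l x • k + eta k x • l + eta u x • u + eta v x • v)
    (hΨ : W.complexify ![fun j => (k j : ℂ), fun j => u j + I * v j, fun j => k j,
        fun j => u j + I * v j] = 0) :
    IsWAND W k := by
  have hkk₀₁ (z w) : W ![k, k, z, w] = 0 := by linarith [hanti k k z w]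
  have hkk₂₃ (x y) : W ![x, y, k, k] = 0 := by rw [← hpair, hkk₀₁]
  have hflip (x y) : W ![x, k, y, k] = W ![k, x, k, y] := by
    linarith [hanti x k y k, hpair y k k x, hanti k y k x, hpair k x k y]
  rw [W.complexify_apply_add_mul_I hpair] at hΨ
  have hFmH : W ![k, u, k, u] - W ![k, v, k, v] = 0 := by simpa using congr(Complex.re $hΨ)
  have hG : W ![k, u, k, v] = 0 := by simpa using congr(Complex.im $hΨ)
  have hFpH : W ![k, u, k, u] + W ![k, v, k, v] = 0 := by
    have hcomplete : ∀ x, x = ∑ p, eta (![l, k, u, v] p) x • ![k, l, u, v] p := by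
      simpa [Fin.sum_univ_four] using hframe
    have htrace_frame := sum_minkowskiSign_mul_eq_of_complete (W.bilin₀₂ k k) _ _ hcomplete
    simp only [bilin₀₂_apply, htrace k k] at htrace_frame
    simpa [Fin.sum_univ_four, hkk₀₁, hkk₂₃, hflip, eq_comm] using htrace_frame
  have hF : W ![k, u, k, u] = 0 := by linarith
  have hH : W ![k, v, k, v] = 0 := by linarith
  refine ⟨hk, hkk, fun x y hx hy => ?_⟩
  rw [hframe x, hframe y, hx, hy]
  simp [map_add_slot₁, map_add_slot₃, map_smul_slot₁, map_smul_slot₃, hkk₀₁, hkk₂₃,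
    hpair k u k v, hF, hG, hH]

/-- `lineBase i + z • lineDir i` is `![p(z), m(z), p(z), m(z)]`, where
`p(z) = ℓ + (z/2)(m₂ - i m₃)` and `m(z) = m₂ + i m₃ - z n`. -/
noncomputable def lineBase : Fin 4 → Fin 4 → ℂ :=
  ![![1, 1, 0, 0], ![0, 0, 1, I], ![1, 1, 0, 0], ![0, 0, 1, I]]

noncomputable def lineDir : Fin 4 → Fin 4 → ℂ :=
  ![![0, 0, 1 / 2, -I / 2], ![1 / 2, -1 / 2, 0, 0], ![0, 0, 1 / 2, -I / 2],
    ![1 / 2, -1 / 2, 0, 0]]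

noncomputable def nullDirection (z : ℂ) : Fin 4 → ℝ :=
  ![1 + Complex.normSq z / 4, 1 - Complex.normSq z / 4, z.re, z.im]

noncomputable def transverse₂ (z : ℂ) : Fin 4 → ℝ := ![z.re / 2, -z.re / 2, 1, 0]

noncomputable def transverse₃ (z : ℂ) : Fin 4 → ℝ := ![z.im / 2, -z.im / 2, 0, 1]

theorem nullDirection_ne_zero (z : ℂ) : nullDirection z ≠ 0 := by
  intro h
  have h0 := congr_fun h 0
  simp only [nullDirection, Matrix.cons_val_zero, Pi.zero_apply] at h0
  linarith [Complex.normSq_nonneg z]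

theorem eta_nullDirection_self (z : ℂ) : eta (nullDirection z) (nullDirection z) = 0 := by
  simp [eta, nullDirection, Fin.sum_univ_four, Complex.normSq_apply]
  ring

theorem nullDirection_frame (z : ℂ) (x : Fin 4 → ℝ) :
    x = eta ![-1 / 2, 1 / 2, 0, 0] x • nullDirection z +
      eta (nullDirection z) x • ![-1 / 2, 1 / 2, 0, 0] +
      eta (transverse₂ z) x • transverse₂ z + eta (transverse₃ z) x • transverse₃ z := by
  funext i
  fin_cases i <;>
    simp [eta, nullDirection, transverse₂, transverse₃, Fin.sum_univ_four, Complex.normSq_apply] <;>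
    ring

section WeylFourDim

variable {W : MultilinearMap ℝ (fun _ : Fin 4 => Fin 4 → ℝ) ℝ}

theorem complexify_nullDirection (hanti : ∀ x y z w, W ![y, x, z, w] = -W ![x, y, z, w])
    (hpair : ∀ x y z w, W ![z, w, x, y] = W ![x, y, z, w]) (z : ℂ) :
    W.complexify ![fun j => (nullDirection z j : ℂ), fun j => transverse₂ z j + I * transverse₃ z j,
        fun j => nullDirection z j, fun j => transverse₂ z j + I * transverse₃ z j] =
      W.complexify fun i => lineBase i + z • lineDir i := by
  have hm : (fun j => (transverse₂ z j : ℂ) + I * transverse₃ z j) =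
      lineBase 1 + z • lineDir 1 := by
    funext j
    fin_cases j <;> apply Complex.ext <;>
      simp [transverse₂, transverse₃, lineBase, lineDir] <;> ring
  have hk : (fun j => (nullDirection z j : ℂ)) =
      lineBase 0 + z • lineDir 0 + ((starRingEnd ℂ) z / 2) • (lineBase 1 + z • lineDir 1) := by
    funext j
    fin_cases j <;> apply Complex.ext <;>
      simp [nullDirection, lineBase, lineDir, Complex.normSq_apply] <;> ring
  rw [hm, hk, map_add_smul_self (complexify_domDomCongr_swap₀₁_eq_neg hanti)
    (complexify_domDomCongr_swap₂₃_eq_neg hanti hpair)]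
  congr 1
  funext i
  fin_cases i <;> rfl

theorem isWAND_nullDirection (hanti : ∀ x y z w, W ![y, x, z, w] = -W ![x, y, z, w])
    (hpair : ∀ x y z w, W ![z, w, x, y] = W ![x, y, z, w])
    (htrace : ∀ x y, ∑ a : Fin 4, minkowskiSign a * W ![Pi.single a 1, x, Pi.single a 1, y] = 0)
    {z : ℂ} (hz : W.complexify (fun i => lineBase i + z • lineDir i) = 0) :
    IsWAND W (nullDirection z) :=
  isWAND_of_null_frame W hanti hpair htrace (nullDirection_ne_zero z) (eta_nullDirection_self z)
    (nullDirection_frame z) (complexify_nullDirection hanti hpair z ▸ hz)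

theorem isWAND_of_complexify_lineDir (hanti : ∀ x y z w, W ![y, x, z, w] = -W ![x, y, z, w])
    (hpair : ∀ x y z w, W ![z, w, x, y] = W ![x, y, z, w])
    (htrace : ∀ x y, ∑ a : Fin 4, minkowskiSign a * W ![Pi.single a 1, x, Pi.single a 1, y] = 0)
    (h : W.complexify lineDir = 0) :
    IsWAND W ![1 / 2, -1 / 2, 0, 0] := by
  refine isWAND_of_null_frame W hanti hpair htrace (l := ![-1, -1, 0, 0]) (u := ![0, 0, 1, 0])
    (v := ![0, 0, 0, -1]) (by simp) (by simp [eta, Fin.sum_univ_four]; norm_num) (fun x => ?_) ?_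
  · funext i
    fin_cases i <;> simp [eta, Fin.sum_univ_four] <;> ring
  · have hn : (fun j => ((![1 / 2, -1 / 2, 0, 0] : Fin 4 → ℝ) j : ℂ)) = lineDir 1 := by
      funext j; fin_cases j <;> simp [lineDir]
    have hm : (fun j => ((![0, 0, 1, 0] : Fin 4 → ℝ) j : ℂ) + I * (![0, 0, 0, -1] : Fin 4 → ℝ) j) =
        (2 : ℂ) • lineDir 0 := by
      funext j; fin_cases j <;> simp [lineDir]; ring
    have hlineDir : lineDir = ![lineDir 0, lineDir 1, lineDir 0, lineDir 1] := by
      funext i; fin_cases i <;> rfl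
    rw [hn, hm, map_smul_slot₁, map_smul_slot₃,
      map_swap₀₁ (complexify_domDomCongr_swap₀₁_eq_neg hanti),
      map_swap₂₃ (complexify_domDomCongr_swap₂₃_eq_neg hanti hpair), ← hlineDir, h]
    simp

end WeylFourDim

/-- Every Weyl tensor on `ℝ⁴` possesses at least one aligned null
direction: there is a nonzero null vector `k` with `W(k,x,k,y) = 0` for all `x, y`
orthogonal to `k`. -/
theorem stmt_11 (W : MultilinearMap ℝ (fun _ : Fin 4 => (Fin 4 → ℝ)) ℝ)
    (hW : IsWeyl W) :
    ∃ k : Fin 4 → ℝ, k ≠ 0 ∧ eta k k = 0 ∧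
      ∀ x y : Fin 4 → ℝ, eta k x = 0 → eta k y = 0 → W ![k, x, k, y] = 0 := by
  obtain ⟨hanti, hpair, -, htrace⟩ := hW
  by_cases h : W.complexify lineDir = 0
  · exact ⟨_, isWAND_of_complexify_lineDir hanti hpair htrace h⟩
  · obtain ⟨z, hz⟩ := W.complexify.exists_map_add_smul_eq_zero lineBase lineDir h
    exact ⟨_, isWAND_nullDirection hanti hpair htrace hz⟩
end

section
/- Let N ≥ 4, let W be a Weyl tensor on ℝ^N and let (ℓ, n, m_2, …, m_{N−1}) be a null frame. Then the following are equivalent (type N canonical form): (i) W has boost order ≤ −2 with respect to the frame, i.e., every frame component of W vanishes except possibly the components C_{1i1j} = W(n, m_i, n, m_j); (ii) there exists a symmetric bilinear form ψ on ℝ^N with ψ(ℓ,v) = 0 for all v and with vanishing η-trace, such that for all x, y, z, w: W(x,y,z,w) = ⟨ℓ,x⟩⟨ℓ,z⟩ψ(y,w) − ⟨ℓ,x⟩⟨ℓ,w⟩ψ(y,z) − ⟨ℓ,y⟩⟨ℓ,z⟩ψ(x,w) + ⟨ℓ,y⟩⟨ℓ,w⟩ψ(x,z), where ⟨ℓ,x⟩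 = η(ℓ,x). In that case C_{1i1j} = ψ(m_i,m_j), and the matrix (ψ(m_i,m_j)) is symmetric with Σ_i ψ(m_i,m_i) = 0. -/
/-!
Only the frame index `1` (the vector `n`) has negative boost weight, so when the boost order is
at most `-2` a nonvanishing frame component contains `n` at least twice, hence once in each
antisymmetric pair. An alternating form `β` vanishing on all pairs of frame vectors other than
`n` satisfies `β(x,y) = ⟨ℓ,x⟩β(n,y) - ⟨ℓ,y⟩β(n,x)`, since `⟨ℓ,·⟩` is the `n`-coordinate in the
null frame. Applied to both pairs of `W` this gives the canonical form with
`ψ(y,w) = W(n,y,n,w)`. Conversely, a component of the canonical form needs `n` in two slots and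
no `ℓ` in the slots of `ψ`, so its boost weight is at most `-2`. The trace statements come from
evaluating the `η`-trace in the null frame, which is `η`-dual to itself with `ℓ` and `n`
exchanged.
-/

open Function Module

lemma eta_comm {N : ℕ} (x y : Fin N → ℝ) : eta x y = eta y x := by
  simp only [eta, mul_comm (x _)]

lemma eta_single_left {N : ℕ} (a : Fin N) (y : Fin N → ℝ) :
    eta (Pi.single a 1) y = (if (a : ℕ) = 0 then (-1 : ℝ) else 1) * y a := by
  rw [eta, Finset.sum_eq_single a (fun c _ hc => by simp [hc]) (by simp)]
  split_ifs <;> simp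

noncomputable def etaForm (N : ℕ) : (Fin N → ℝ) →ₗ[ℝ] (Fin N → ℝ) →ₗ[ℝ] ℝ :=
  LinearMap.mk₂ ℝ eta
    (fun x x' y => by
      simp only [eta, ← Finset.sum_add_distrib]; congr! 1; split_ifs <;> simp <;> ring)
    (fun c x y => by simp only [eta, Finset.smul_sum]; congr! 1; split_ifs <;> simp <;> ring)
    (fun x y y' => by
      simp only [eta, ← Finset.sum_add_distrib]; congr! 1; split_ifs <;> simp <;> ring)
    (fun c x y => by simp only [eta, Finset.smul_sum]; congr! 1; split_ifs <;> simp <;> ring)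

@[simp] lemma etaForm_apply {N : ℕ} (x y : Fin N → ℝ) : etaForm N x y = eta x y := rfl

lemma Module.Basis.repr_eq_eta_of_dual {ι : Type*} [DecidableEq ι] {N : ℕ}
    (b : Basis ι ℝ (Fin N → ℝ)) {b' : ι → Fin N → ℝ}
    (hb : ∀ i j, eta (b i) (b' j) = if i = j then 1 else 0) (x : Fin N → ℝ) (j : ι) :
    b.repr x j = eta x (b' j) := by
  have : b.coord j = (etaForm N).flip (b' j) :=
    b.ext fun i => by simp [hb, Finsupp.single_apply]
  exact LinearMap.congr_fun this x

lemma Module.Basis.bilin_apply_eq_sum {ι : Type*} [Fintype ι] {R M : Type*} [CommRing R]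
    [AddCommGroup M] [Module R M] (b : Basis ι R M) (ψ : M →ₗ[R] M →ₗ[R] R) (x y : M) :
    ψ x y = ∑ i, b.repr x i * ψ (b i) y := by
  conv_lhs => rw [← b.sum_repr x]
  simp only [map_sum, map_smul, LinearMap.sum_apply, LinearMap.smul_apply,
    smul_eq_mul]

theorem etaTrace_eq_sum_dual {ι : Type*} [Fintype ι] [DecidableEq ι] {N : ℕ}
    (b : Basis ι ℝ (Fin N → ℝ)) {b' : ι → Fin N → ℝ}
    (hb : ∀ i j, eta (b i) (b' j) = if i = j then 1 else 0)
    (ψ : (Fin N → ℝ) →ₗ[ℝ] (Fin N → ℝ) →ₗ[ℝ] ℝ) :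
    ∑ a : Fin N, (if (a : ℕ) = 0 then (-1 : ℝ) else 1) * ψ (Pi.single a 1) (Pi.single a 1) =
      ∑ i, ψ (b i) (b' i) := by
  have expand : ∀ a : Fin N, (if (a : ℕ) = 0 then (-1 : ℝ) else 1) *
      ψ (Pi.single a 1) (Pi.single a 1) = ∑ i, b' i a * ψ (b i) (Pi.single a 1) := by
    intro a
    simp only [b.bilin_apply_eq_sum ψ (Pi.single a 1), b.repr_eq_eta_of_dual hb,
      eta_single_left, Finset.mul_sum]
    congr! 1
    split_ifs <;> ring
  calc _ = ∑ a : Fin N, ∑ i, b' i a * ψ (b i) (Pi.single a 1) :=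
        Finset.sum_congr rfl fun a _ => expand a
    _ = ∑ i, ∑ a : Fin N, b' i a * ψ (b i) (Pi.single a 1) := Finset.sum_comm
    _ = ∑ i, ψ (b i) (b' i) := by
      refine Finset.sum_congr rfl fun i _ => ?_
      conv_rhs => rw [← (Pi.basisFun ℝ (Fin N)).sum_repr (b' i)]
      simp [map_sum]

section UpdateVec

variable {α : Type*} (a b c d x : α)

@[simp] lemma update_vec4_zero : update ![a, b, c, d] 0 x = ![x, b, c, d] := by
  funext k; fin_cases k <;> rfl

@[simp] lemma update_vec4_one : update ![a, b, c, d] 1 x = ![a, x, c, d] := by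
  funext k; fin_cases k <;> rfl

@[simp] lemma update_vec4_two : update ![a, b, c, d] 2 x = ![a, b, x, d] := by
  funext k; fin_cases k <;> rfl

@[simp] lemma update_vec4_three : update ![a, b, c, d] 3 x = ![a, b, c, x] := by
  funext k; fin_cases k <;> rfl

end UpdateVec

namespace MultilinearMap

variable {R ι M : Type*} [CommSemiring R] [AddCommMonoid M] [Module R M] [DecidableEq ι]

def toBilin (W : MultilinearMap R (fun _ : ι => M) R) (v : ι → M) {i j : ι} (hij : i ≠ j) :
    M →ₗ[R] M →ₗ[R] R :=
  LinearMap.mk₂ R (fun x y => W (update (update v i x) j y))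
    (fun x x' y => by simp only [update_comm hij, W.map_update_add])
    (fun c x y => by simp only [update_comm hij, W.map_update_smul, smul_eq_mul])
    (fun x y y' => W.map_update_add _ j y y')
    (fun c x y => W.map_update_smul _ j c y)

@[simp] lemma toBilin_apply (W : MultilinearMap R (fun _ : ι => M) R) (v : ι → M) {i j : ι}
    (hij : i ≠ j) (x y : M) : W.toBilin v hij x y = W (update (update v i x) j y) := rfl

end MultilinearMap

lemma LinearMap.IsAlt.apply_eq_coord_mul_sub {ι R M : Type*} [CommRing R] [AddCommGroup M]
    [Module R M] {β : M →ₗ[R] M →ₗ[R] R} (hβ : β.IsAlt) (b : Basis ι R M) (i₀ : ι)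
    (hβ₀ : ∀ i j, i ≠ i₀ → j ≠ i₀ → β (b i) (b j) = 0) (x y : M) :
    β x y = b.coord i₀ x * β (b i₀) y - b.coord i₀ y * β (b i₀) x := by
  have : β = (b.coord i₀).smulRight (β (b i₀)) - (β (b i₀)).smulRight (b.coord i₀) := by
    refine LinearMap.ext_basis b b fun i j => ?_
    by_cases hi : i = i₀ <;> by_cases hj : j = i₀
    · subst hi hj; simp [hβ.self_eq_zero]
    · subst hi; simp [Ne.symm hj]
    · subst hj; simp [Ne.symm hi, ← hβ.neg (b i)]
    · simp [Ne.symm hi, Ne.symm hj, hβ₀ i j hi hj]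
  rw [LinearMap.congr_fun₂ this x y]
  simp only [LinearMap.sub_apply, LinearMap.smulRight_apply, LinearMap.smul_apply, smul_eq_mul]
  ring

namespace IsWeyl

variable {N : ℕ} {W : MultilinearMap ℝ (fun _ : Fin 4 => (Fin N → ℝ)) ℝ}

lemma antisymm_right (hW : IsWeyl W) (x y z w : Fin N → ℝ) :
    W ![x, y, w, z] = -W ![x, y, z, w] := by
  rw [← hW.2.1 x y, hW.1, hW.2.1]

lemma swap_swap (hW : IsWeyl W) (x y z w : Fin N → ℝ) : W ![y, x, w, z] = W ![x, y, z, w] := by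
  rw [hW.1, antisymm_right hW, neg_neg]

lemma apply_self_left (hW : IsWeyl W) (x z w : Fin N → ℝ) : W ![x, x, z, w] = 0 := by
  linarith [hW.1 x x z w]

lemma apply_self_right (hW : IsWeyl W) (x y z : Fin N → ℝ) : W ![x, y, z, z] = 0 := by
  linarith [hW.antisymm_right x y z z]

lemma isAlt_left (hW : IsWeyl W) (z w : Fin N → ℝ) :
    (W.toBilin ![0, 0, z, w] (show (0 : Fin 4) ≠ 1 by decide)).IsAlt := fun x => by
  simpa using hW.apply_self_left x z w

lemma isAlt_right (hW : IsWeyl W) (x y : Fin N → ℝ) :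
    (W.toBilin ![x, y, 0, 0] (show (2 : Fin 4) ≠ 3 by decide)).IsAlt := fun z => by
  simpa using hW.apply_self_right x y z

end IsWeyl

lemma bw_zero {N : ℕ} [NeZero N] : bw (0 : Fin N) = 1 := by
  simp [bw]

lemma bw_one {N : ℕ} [NeZero N] (hN : 1 < N) : bw (1 : Fin N) = -1 := by
  simp [bw, Nat.mod_eq_of_lt hN]

lemma neg_one_le_bw {N : ℕ} (B : Fin N) : -1 ≤ bw B := by
  unfold bw; split_ifs <;> norm_num

lemma bw_nonpos_of_ne_zero {N : ℕ} [NeZero N] {B : Fin N} (hB : B ≠ 0) : bw B ≤ 0 := by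
  have : (B : ℕ) ≠ 0 := fun h => hB (Fin.ext h)
  unfold bw; split_ifs <;> omega

lemma bw_nonneg_of_ne_one {N : ℕ} [NeZero N] {B : Fin N} (hB : B ≠ 1) : 0 ≤ bw B := by
  have : (B : ℕ) ≠ 1 := fun h =>
    hB (Fin.ext (by rw [h, Fin.val_one', Nat.mod_eq_of_lt (h ▸ B.isLt)]))
  unfold bw; split_ifs <;> omega

lemma bw_add_bw_nonneg {N : ℕ} [NeZero N] {B C : Fin N} (hB : B ≠ 1) (hC : C ≠ 1) :
    0 ≤ bw B + bw C := by
  linarith [bw_nonneg_of_ne_one hB, bw_nonneg_of_ne_one hC]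

lemma neg_one_le_bw_add_bw {N : ℕ} [NeZero N] {B C : Fin N} (h : ¬(B = 1 ∧ C = 1)) :
    -1 ≤ bw B + bw C := by
  by_cases hB : B = 1
  · linarith [neg_one_le_bw B, bw_nonneg_of_ne_one fun hC => h ⟨hB, hC⟩]
  · linarith [neg_one_le_bw C, bw_nonneg_of_ne_one hB]

lemma mem_sp {N : ℕ} {B : Fin N} : B ∈ sp N ↔ 2 ≤ (B : ℕ) := by
  simp [sp]

section Spatial

variable {N : ℕ} [NeZero N]

lemma ne_zero_of_mem_sp {B : Fin N} (hB : B ∈ sp N) : B ≠ 0 := by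
  rintro rfl; simp [sp] at hB

lemma ne_one_of_mem_sp {B : Fin N} (hB : B ∈ sp N) : B ≠ 1 := by
  simp only [sp, Finset.mem_filter, Finset.mem_univ, true_and] at hB
  intro h
  have h1 := congrArg Fin.val h
  rw [Fin.val_one', Nat.mod_eq_of_lt (by omega)] at h1
  omega

lemma eq_zero_or_eq_one_or_mem_sp (hN : 1 < N) (B : Fin N) : B = 0 ∨ B = 1 ∨ B ∈ sp N := by
  simp only [sp, Finset.mem_filter, Finset.mem_univ, true_and, Fin.ext_iff, Fin.val_zero,
    Fin.val_one', Nat.mod_eq_of_lt hN]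
  omega

lemma sum_univ_eq_add_add_sum_sp {M : Type*} [AddCommMonoid M] (hN : 1 < N) (g : Fin N → M) :
    ∑ B, g B = g 0 + g 1 + ∑ B ∈ sp N, g B := by
  have h01 : (1 : Fin N) ∈ Finset.univ.erase 0 := by
    simp [Fin.ext_iff, Nat.mod_eq_of_lt hN]
  rw [← Finset.add_sum_erase _ _ (Finset.mem_univ 0), ← Finset.add_sum_erase _ _ h01, add_assoc]
  congr 3
  ext B
  simp only [sp, Finset.mem_erase, Finset.mem_univ, Finset.mem_filter, and_true, true_and,
    Ne, Fin.ext_iff, Fin.val_zero, Fin.val_one', Nat.mod_eq_of_lt hN]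
  omega

end Spatial

namespace IsNullFrame

variable {N : ℕ} [NeZero N] {f : Fin N → Fin N → ℝ}

lemma zero_ne_one (hf : IsNullFrame f) : (0 : Fin N) ≠ 1 := fun h => by
  simpa [← h, hf.2.1] using hf.2.2.2.1

lemma one_lt (hf : IsNullFrame f) : 1 < N :=
  Fin.nontrivial_iff_two_le.mp ⟨⟨0, 1, hf.zero_ne_one⟩⟩

lemma eta_swap (hf : IsNullFrame f) (B D : Fin N) :
    eta (f B) (f (Equiv.swap 0 1 D)) = if B = D then 1 else 0 := by
  have h01 := hf.zero_ne_one
  have hN := hf.one_lt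
  obtain ⟨-, hℓℓ, hnn, hℓn, hmm, hℓm⟩ := hf
  have hmℓ : ∀ i ∈ sp N, eta (f i) (f 0) = 0 ∧ eta (f i) (f 1) = 0 := fun i hi => by
    simpa [eta_comm (f i)] using hℓm i (mem_sp.mp hi)
  have hfix : ∀ i ∈ sp N, Equiv.swap 0 1 i = i := fun i hi =>
    Equiv.swap_apply_of_ne_of_ne (ne_zero_of_mem_sp hi) (ne_one_of_mem_sp hi)
  rcases eq_zero_or_eq_one_or_mem_sp hN B with rfl | rfl | hB <;>
    rcases eq_zero_or_eq_one_or_mem_sp hN D with rfl | rfl | hD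
  · simpa using hℓn
  · simpa [h01] using hℓℓ
  · simp [hfix D hD, (ne_zero_of_mem_sp hD).symm, eta_comm (f 0), hmℓ D hD]
  · simpa [h01.symm] using hnn
  · simpa [eta_comm (f 1)] using hℓn
  · simp [hfix D hD, (ne_one_of_mem_sp hD).symm, eta_comm (f 1), hmℓ D hD]
  · simp [ne_zero_of_mem_sp hB, hmℓ B hB]
  · simp [ne_one_of_mem_sp hB, hmℓ B hB]
  · rw [hfix D hD]; exact hmm B D (mem_sp.mp hB) (mem_sp.mp hD)

noncomputable def basis (hf : IsNullFrame f) : Basis (Fin N) ℝ (Fin N → ℝ) :=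
  basisOfLinearIndependentOfCardEqFinrank hf.1 (by simp)

@[simp] lemma coe_basis (hf : IsNullFrame f) : ⇑hf.basis = f :=
  coe_basisOfLinearIndependentOfCardEqFinrank _ _

lemma coord_one (hf : IsNullFrame f) (x : Fin N → ℝ) : hf.basis.coord 1 x = eta (f 0) x := by
  rw [Basis.coord_apply, hf.basis.repr_eq_eta_of_dual (b' := f ∘ Equiv.swap 0 1)
    (by simpa using hf.eta_swap), comp_apply, Equiv.swap_apply_right, eta_comm]

lemma eta_zero_left (hf : IsNullFrame f) (B : Fin N) :
    eta (f 0) (f B) = if B = 1 then 1 else 0 := by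
  have h := hf.coord_one (hf.basis B)
  rwa [Basis.coord_apply, Basis.repr_self, hf.coe_basis, Finsupp.single_apply, eq_comm] at h

theorem etaTrace_eq (hf : IsNullFrame f) (ψ : (Fin N → ℝ) →ₗ[ℝ] (Fin N → ℝ) →ₗ[ℝ] ℝ) :
    ∑ a : Fin N, (if (a : ℕ) = 0 then (-1 : ℝ) else 1) * ψ (Pi.single a 1) (Pi.single a 1) =
      ψ (f 0) (f 1) + ψ (f 1) (f 0) + ∑ i ∈ sp N, ψ (f i) (f i) := by
  rw [etaTrace_eq_sum_dual hf.basis (b' := f ∘ Equiv.swap 0 1) (by simpa using hf.eta_swap),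
    sum_univ_eq_add_add_sum_sp hf.one_lt]
  simp only [coe_basis, comp_apply, Equiv.swap_apply_left, Equiv.swap_apply_right]
  congr 1
  refine Finset.sum_congr rfl fun i hi => ?_
  rw [Equiv.swap_apply_of_ne_of_ne (ne_zero_of_mem_sp hi) (ne_one_of_mem_sp hi)]

end IsNullFrame

noncomputable def typeN {N : ℕ} (ℓ : Fin N → ℝ) (ψ : (Fin N → ℝ) →ₗ[ℝ] (Fin N → ℝ) →ₗ[ℝ] ℝ)
    (x y z w : Fin N → ℝ) : ℝ :=
  eta ℓ x * eta ℓ z * ψ y w - eta ℓ x * eta ℓ w * ψ y z - eta ℓ y * eta ℓ z * ψ x w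
    + eta ℓ y * eta ℓ w * ψ x z

noncomputable def weylPsi {N : ℕ} (W : MultilinearMap ℝ (fun _ : Fin 4 => (Fin N → ℝ)) ℝ)
    (n : Fin N → ℝ) : (Fin N → ℝ) →ₗ[ℝ] (Fin N → ℝ) →ₗ[ℝ] ℝ :=
  W.toBilin ![n, 0, n, 0] (show (1 : Fin 4) ≠ 3 by decide)

@[simp] lemma weylPsi_apply {N : ℕ} (W : MultilinearMap ℝ (fun _ : Fin 4 => (Fin N → ℝ)) ℝ)
    (n x y : Fin N → ℝ) : weylPsi W n x y = W ![n, x, n, y] := by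
  simp [weylPsi]

lemma IsWeyl.weylPsi_comm {N : ℕ} {W : MultilinearMap ℝ (fun _ : Fin 4 => (Fin N → ℝ)) ℝ}
    (hW : IsWeyl W) (n x y : Fin N → ℝ) : weylPsi W n x y = weylPsi W n y x := by
  simpa using hW.2.1 n y n x

lemma IsWeyl.etaTrace_weylPsi {N : ℕ} {W : MultilinearMap ℝ (fun _ : Fin 4 => (Fin N → ℝ)) ℝ}
    (hW : IsWeyl W) (n : Fin N → ℝ) :
    ∑ a : Fin N, (if (a : ℕ) = 0 then (-1 : ℝ) else 1) *
      weylPsi W n (Pi.single a 1) (Pi.single a 1) = 0 := by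
  simpa [hW.swap_swap] using hW.2.2.2 n n

def BoostOrderLE {N : ℕ} (W : MultilinearMap ℝ (fun _ : Fin 4 => (Fin N → ℝ)) ℝ)
    (f : Fin N → Fin N → ℝ) (k : ℤ) : Prop :=
  ∀ B C D E : Fin N, k < bw B + bw C + bw D + bw E → W ![f B, f C, f D, f E] = 0

lemma boostOrderLE_iff {N : ℕ} {W : MultilinearMap ℝ (fun _ : Fin 4 => (Fin N → ℝ)) ℝ}
    {f : Fin N → Fin N → ℝ} {k : ℤ} :
    (∀ A : Fin 4 → Fin N, k < ∑ i, bw (A i) → W (fun i => f (A i)) = 0) ↔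
      BoostOrderLE W f k := by
  simp only [Fin.sum_univ_four, BoostOrderLE]
  refine ⟨fun h B C D E hlt => ?_, fun h A hlt => ?_⟩
  · have := h ![B, C, D, E] hlt
    rwa [← FinVec.etaExpand_eq fun i => f (![B, C, D, E] i)] at this
  · rw [← FinVec.etaExpand_eq fun i => f (A i)]
    exact h (A 0) (A 1) (A 2) (A 3) hlt

section BoostOrder

variable {N : ℕ} [NeZero N] {W : MultilinearMap ℝ (fun _ : Fin 4 => (Fin N → ℝ)) ℝ}
  {f : Fin N → Fin N → ℝ}

lemma IsWeyl.apply_frame_frame_left_eq_zero (hW : IsWeyl W) (hf : IsNullFrame f)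
    (hbo : BoostOrderLE W f (-2)) {B C : Fin N} (hB : B ≠ 1) (hC : C ≠ 1) (z w : Fin N → ℝ) :
    W ![f B, f C, z, w] = 0 := by
  have : W.toBilin ![f B, f C, 0, 0] (show (2 : Fin 4) ≠ 3 by decide) = 0 :=
    LinearMap.ext_basis hf.basis hf.basis fun D E => by
      simp only [IsNullFrame.coe_basis, MultilinearMap.toBilin_apply, update_vec4_two,
        update_vec4_three, LinearMap.zero_apply]
      by_cases hDE : D = 1 ∧ E = 1
      · rw [hDE.1, hDE.2, hW.apply_self_right]
      · exact hbo B C D E (by linarith [bw_add_bw_nonneg hB hC, neg_one_le_bw_add_bw hDE])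
  simpa using LinearMap.congr_fun₂ this z w

lemma IsWeyl.apply_one_frame_frame_eq_zero (hW : IsWeyl W) (hf : IsNullFrame f)
    (hbo : BoostOrderLE W f (-2)) {D E : Fin N} (hD : D ≠ 1) (hE : E ≠ 1) (y : Fin N → ℝ) :
    W ![f 1, y, f D, f E] = 0 := by
  have : W.toBilin ![0, 0, f D, f E] (show (0 : Fin 4) ≠ 1 by decide) (f 1) = 0 :=
    hf.basis.ext fun C => by
      simp only [IsNullFrame.coe_basis, MultilinearMap.toBilin_apply, update_vec4_zero,
        update_vec4_one, LinearMap.zero_apply]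
      by_cases hC : C = 1
      · rw [hC, hW.apply_self_left]
      · exact hbo 1 C D E (by
          linarith [neg_one_le_bw_add_bw (B := 1) (C := C) (by tauto), bw_add_bw_nonneg hD hE])
  simpa using LinearMap.congr_fun this y

lemma IsWeyl.weylPsi_zero_eq_zero (hW : IsWeyl W) (hf : IsNullFrame f)
    (hbo : BoostOrderLE W f (-2)) : weylPsi W (f 1) (f 0) = 0 :=
  hf.basis.ext fun E => by
    simp only [IsNullFrame.coe_basis, weylPsi_apply, LinearMap.zero_apply]
    by_cases hE : E = 1
    · rw [hE, hW.apply_self_right]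
    · exact hbo 1 0 1 E (by
        linarith [bw_one hf.one_lt, bw_zero (N := N), neg_one_le_bw_add_bw (B := 1) (C := E)
          (by tauto)])

theorem IsWeyl.eq_typeN_of_boostOrderLE (hW : IsWeyl W) (hf : IsNullFrame f)
    (hbo : BoostOrderLE W f (-2)) (x y z w : Fin N → ℝ) :
    W ![x, y, z, w] = typeN (f 0) (weylPsi W (f 1)) x y z w := by
  have expand_left : ∀ x y, W ![x, y, z, w] =
      eta (f 0) x * W ![f 1, y, z, w] - eta (f 0) y * W ![f 1, x, z, w] := fun x y => by
    simpa [hf.coord_one] using (hW.isAlt_left z w).apply_eq_coord_mul_sub hf.basis 1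
      (fun B C hB hC => by simpa using hW.apply_frame_frame_left_eq_zero hf hbo hB hC z w) x y
  have expand_right : ∀ y, W ![f 1, y, z, w] =
      eta (f 0) z * W ![f 1, y, f 1, w] - eta (f 0) w * W ![f 1, y, f 1, z] := fun y => by
    simpa [hf.coord_one] using (hW.isAlt_right (f 1) y).apply_eq_coord_mul_sub hf.basis 1
      (fun D E hD hE => by simpa using hW.apply_one_frame_frame_eq_zero hf hbo hD hE y) z w
  rw [expand_left, expand_right, expand_right]
  simp only [typeN, weylPsi_apply]
  ring

theorem boostOrderLE_of_eq_typeN (hf : IsNullFrame f)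
    {ψ : (Fin N → ℝ) →ₗ[ℝ] (Fin N → ℝ) →ₗ[ℝ] ℝ} (hsym : ∀ x y, ψ x y = ψ y x)
    (hψ : ∀ v, ψ (f 0) v = 0) (hW : ∀ x y z w, W ![x, y, z, w] = typeN (f 0) ψ x y z w) :
    BoostOrderLE W f (-2) := by
  have term_eq_zero : ∀ X Y Z U : Fin N, -2 < bw X + bw Y + bw Z + bw U →
      eta (f 0) (f X) * eta (f 0) (f Y) * ψ (f Z) (f U) = 0 := by
    intro X Y Z U h
    by_cases hXY : X = 1 ∧ Y = 1
    · obtain ⟨rfl, rfl⟩ := hXY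
      by_cases hZ : Z = 0
      · simp [hZ, hψ]
      by_cases hU : U = 0
      · simp [hU, hsym _ (f 0), hψ]
      linarith [bw_one hf.one_lt, bw_nonpos_of_ne_zero hZ, bw_nonpos_of_ne_zero hU]
    · rcases not_and_or.mp hXY with hX | hY <;> simp [hf.eta_zero_left, *]
  intro B C D E h
  rw [hW, typeN, term_eq_zero B D C E (by linarith), term_eq_zero B E C D (by linarith),
    term_eq_zero C D B E (by linarith), term_eq_zero C E B D (by linarith)]
  ring

end BoostOrder

theorem stmt_13_general (N : ℕ) [NeZero N]
    (W : MultilinearMap ℝ (fun _ : Fin 4 => (Fin N → ℝ)) ℝ) (hW : IsWeyl W)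
    (f : Fin N → Fin N → ℝ) (hf : IsNullFrame f) :
    ((∀ A : Fin 4 → Fin N, (-2 : ℤ) < ∑ k, bw (A k) → W (fun k => f (A k)) = 0) ↔
      (∃ ψ : (Fin N → ℝ) →ₗ[ℝ] (Fin N → ℝ) →ₗ[ℝ] ℝ,
        (∀ x y, ψ x y = ψ y x) ∧ (∀ v, ψ (f 0) v = 0) ∧
        (∑ a : Fin N, (if (a : ℕ) = 0 then (-1 : ℝ) else 1) *
          ψ (Pi.single a 1) (Pi.single a 1)) = 0 ∧
        (∀ x y z w : Fin N → ℝ, W ![x, y, z, w] =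
          eta (f 0) x * eta (f 0) z * ψ y w - eta (f 0) x * eta (f 0) w * ψ y z
            - eta (f 0) y * eta (f 0) z * ψ x w
            + eta (f 0) y * eta (f 0) w * ψ x z))) ∧
    (∀ ψ : (Fin N → ℝ) →ₗ[ℝ] (Fin N → ℝ) →ₗ[ℝ] ℝ,
      (∀ x y, ψ x y = ψ y x) → (∀ v, ψ (f 0) v = 0) →
      (∑ a : Fin N, (if (a : ℕ) = 0 then (-1 : ℝ) else 1) *
        ψ (Pi.single a 1) (Pi.single a 1)) = 0 →
      (∀ x y z w : Fin N → ℝ, W ![x, y, z, w] =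
          eta (f 0) x * eta (f 0) z * ψ y w - eta (f 0) x * eta (f 0) w * ψ y z
            - eta (f 0) y * eta (f 0) z * ψ x w
            + eta (f 0) y * eta (f 0) w * ψ x z) →
      (∀ i j : Fin N, 2 ≤ (i : ℕ) → 2 ≤ (j : ℕ) →
          W ![f 1, f i, f 1, f j] = ψ (f i) (f j)) ∧
        ∑ i ∈ sp N, ψ (f i) (f i) = 0) := by
  rw [boostOrderLE_iff]
  refine ⟨⟨fun hbo => ?_, fun ⟨ψ, hsym, hψ, _, hform⟩ => boostOrderLE_of_eq_typeN hf hsym hψ hform⟩,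
    fun ψ hsym hψ htrace hform => ⟨fun i j hi hj => ?_, ?_⟩⟩
  · exact ⟨weylPsi W (f 1), hW.weylPsi_comm (f 1),
      LinearMap.congr_fun (hW.weylPsi_zero_eq_zero hf hbo), hW.etaTrace_weylPsi (f 1),
      hW.eq_typeN_of_boostOrderLE hf hbo⟩
  · simp [hform, hf.eta_zero_left, ne_one_of_mem_sp (mem_sp.mpr hi),
      ne_one_of_mem_sp (mem_sp.mpr hj)]
  · have := hf.etaTrace_eq ψ
    rw [htrace, hψ, hsym, hψ] at this
    linarith

/-- type **N** canonical form. For a Weyl tensor `W` and a null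
frame with `ℓ = f 0`, the following are equivalent: (i) `W` has boost order `≤ -2`
(only the components `C_{1i1j}` may survive); (ii) there is a symmetric bilinear form
`ψ` with `ψ(ℓ,·) = 0` and vanishing `η`-trace such that
`W(x,y,z,w) = ⟨ℓ,x⟩⟨ℓ,z⟩ψ(y,w) - ⟨ℓ,x⟩⟨ℓ,w⟩ψ(y,z) - ⟨ℓ,y⟩⟨ℓ,z⟩ψ(x,w) + ⟨ℓ,y⟩⟨ℓ,w⟩ψ(x,z)`.
In that case `C_{1i1j} = ψ(m_i,m_j)`, and this matrix is symmetric with vanishing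
spatial trace `∑ᵢ ψ(m_i,m_i) = 0`. -/
theorem stmt_13 (N : ℕ) [NeZero N] (hN : 4 ≤ N)
    (W : MultilinearMap ℝ (fun _ : Fin 4 => (Fin N → ℝ)) ℝ) (hW : IsWeyl W)
    (f : Fin N → Fin N → ℝ) (hf : IsNullFrame f) :
    ((∀ A : Fin 4 → Fin N, (-2 : ℤ) < ∑ k, bw (A k) → W (fun k => f (A k)) = 0) ↔
      (∃ ψ : (Fin N → ℝ) →ₗ[ℝ] (Fin N → ℝ) →ₗ[ℝ] ℝ,
        (∀ x y, ψ x y = ψ y x) ∧ (∀ v, ψ (f 0) v = 0) ∧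
        (∑ a : Fin N, (if (a : ℕ) = 0 then (-1 : ℝ) else 1) *
          ψ (Pi.single a 1) (Pi.single a 1)) = 0 ∧
        (∀ x y z w : Fin N → ℝ, W ![x, y, z, w] =
          eta (f 0) x * eta (f 0) z * ψ y w - eta (f 0) x * eta (f 0) w * ψ y z
            - eta (f 0) y * eta (f 0) z * ψ x w
            + eta (f 0) y * eta (f 0) w * ψ x z))) ∧
    (∀ ψ : (Fin N → ℝ) →ₗ[ℝ] (Fin N → ℝ) →ₗ[ℝ] ℝ,
      (∀ x y, ψ x y = ψ y x) → (∀ v, ψ (f 0) v = 0) →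
      (∑ a : Fin N, (if (a : ℕ) = 0 then (-1 : ℝ) else 1) *
        ψ (Pi.single a 1) (Pi.single a 1)) = 0 →
      (∀ x y z w : Fin N → ℝ, W ![x, y, z, w] =
          eta (f 0) x * eta (f 0) z * ψ y w - eta (f 0) x * eta (f 0) w * ψ y z
            - eta (f 0) y * eta (f 0) z * ψ x w
            + eta (f 0) y * eta (f 0) w * ψ x z) →
      (∀ i j : Fin N, 2 ≤ (i : ℕ) → 2 ≤ (j : ℕ) →
          W ![f 1, f i, f 1, f j] = ψ (f i) (f j)) ∧
        ∑ i ∈ sp N, ψ (f i) (f i) = 0) :=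
  stmt_13_general N W hW f hf
end

section
/- Let N ≥ 2, let S and T be p-linear forms on ℝ^N, and fix a null frame (ℓ, n, m_2, …, m_{N−1}). For a multi-index A = (A_1,…,A_p) ∈ {0,…,N−1}^p let Ā be obtained from A by interchanging every index 0 with 1 and fixing all spatial indices. If the sum of the boost orders of S and T with respect to the frame is negative (in particular, if both S and T have negative boost order), then the complete η-contraction vanishes: Σ_A S_{A_1…A_p} T_{Ā_1…Ā_p} = 0. In particular, a Weyl tensor W of boost order ≤ −1 with respect to some null frame (type III, N or O) has vanishing quadratic invariant C_{abcd}C^{abcd} = Σ_A W_{A_1A_2A_3A_4} W_{Ā_1Ā_2Ā_3Ā_4} = 0. -/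
/-- Index conjugation raising/lowering: interchange `0 ↔ 1` (i.e. `ℓ ↔ n`), fixing all
spatial indices.  Since the frame is `η`-null-orthonormal, the complete contraction of
two `p`-linear forms is `S_{A₁…A_p} T^{A₁…A_p} = ∑_A S_{A₁…A_p} T_{Ā₁…Ā_p}`. -/
def conj {N : ℕ} [NeZero N] (A : Fin N) : Fin N :=
  if (A : ℕ) = 0 then 1 else if (A : ℕ) = 1 then 0 else A

lemma bw_conj {N : ℕ} [NeZero N] (hN : 2 ≤ N) (a : Fin N) : bw (conj a) = -bw a := by
  have h1 : ((1 : Fin N) : ℕ) = 1 := by rw [Fin.val_one', Nat.mod_eq_of_lt (by omega)]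
  unfold bw conj
  split_ifs <;> simp_all

lemma sum_bw_conj {N p : ℕ} [NeZero N] (hN : 2 ≤ N) (A : Fin p → Fin N) :
    ∑ k, bw (conj (A k)) = -∑ k, bw (A k) := by
  simp only [bw_conj hN, Finset.sum_neg_distrib]

lemma sum_bw_le_boostOrder {N p : ℕ} (T : MultilinearMap ℝ (fun _ : Fin p => (Fin N → ℝ)) ℝ)
    (f : Fin N → Fin N → ℝ) (A : Fin p → Fin N) (hA : T (fun k => f (A k)) ≠ 0) :
    ((∑ k, bw (A k) : ℤ) : WithBot ℤ) ≤ boostOrder p T f := by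
  classical
  unfold boostOrder
  convert Finset.le_sup (Finset.mem_univ A)
  simp [hA]

/-- Each term `S_A T_Ā` pairs a component of boost weight `b` with one of weight `-b`, so it
vanishes unless `0 ≤ boostOrder S + boostOrder T`. -/
theorem sum_mul_conj_eq_zero_of_boostOrder_add_neg {N p : ℕ} [NeZero N] (hN : 2 ≤ N)
    (f : Fin N → Fin N → ℝ) (S T : MultilinearMap ℝ (fun _ : Fin p => (Fin N → ℝ)) ℝ)
    (hST : boostOrder p S f + boostOrder p T f < 0) :
    ∑ A : Fin p → Fin N, S (fun k => f (A k)) * T (fun k => f (conj (A k))) = 0 := by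
  refine Finset.sum_eq_zero fun A _ => ?_
  by_contra hA
  obtain ⟨hS, hT⟩ := mul_ne_zero_iff.mp hA
  have h := add_le_add (sum_bw_le_boostOrder S f A hS) (sum_bw_le_boostOrder T f _ hT)
  rw [sum_bw_conj hN, ← WithBot.coe_add, add_neg_cancel, WithBot.coe_zero] at h
  exact h.not_gt hST

/-- If the sum of the boost orders of two `p`-linear forms `S`, `T`
with respect to a null frame is negative, their complete `η`-contraction vanishes:
`∑_A S_{A₁…A_p} T_{Ā₁…Ā_p} = 0`.  In particular, a Weyl tensor of boost order `≤ -1`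
(type **III**, **N** or **O**) has vanishing quadratic invariant `C_{abcd}C^{abcd}`. -/
theorem stmt_15 (N : ℕ) [NeZero N] (hN : 2 ≤ N) :
    (∀ (p : ℕ) (f : Fin N → Fin N → ℝ), IsNullFrame f →
      ∀ S T : MultilinearMap ℝ (fun _ : Fin p => (Fin N → ℝ)) ℝ,
        boostOrder p S f + boostOrder p T f < 0 →
        ∑ A : Fin p → Fin N,
          S (fun k => f (A k)) * T (fun k => f (conj (A k))) = 0) ∧
    (∀ f : Fin N → Fin N → ℝ, IsNullFrame f →
      ∀ W : MultilinearMap ℝ (fun _ : Fin 4 => (Fin N → ℝ)) ℝ, IsWeyl W →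
        boostOrder 4 W f ≤ ((-1 : ℤ) : WithBot ℤ) →
        ∑ A : Fin 4 → Fin N,
          W (fun k => f (A k)) * W (fun k => f (conj (A k))) = 0) := by
  refine ⟨fun p f _ S T hST => sum_mul_conj_eq_zero_of_boostOrder_add_neg hN f S T hST,
    fun f _ W _ hW => sum_mul_conj_eq_zero_of_boostOrder_add_neg hN f W W ?_⟩
  exact (add_le_add hW hW).trans_lt (by decide)
end
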